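/- arXiv:0805.2368 — 6 statements merged into one kernel-verified Lean document; each statement's English description precedes it below -/
import Mathlib

section
/- Let (X,d) be a compact metric space and H a universal RKHS on X with kernel k (i.e., H is dense in C(X) in the sup norm). Let F be the unit ball of H. Then for Borel probability measures p, q on X, MMD[F,p,q] := sup_{f∈F} (E_{x∼p} f(x) − E_{y∼q} f(y)) equals 0 if and only if p = q. -/
/-!
The MMD is the dual norm of `f ↦ ∫ ι f ∂p - ∫ ι f ∂q` on `H`, i.e. of the functional
`∫ · ∂p - ∫ · ∂q` on `C(X, ℝ)` precomposed with `ι`. Since `ι` has dense range, it vanishes iff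
`p` and `q` give the same integral to every continuous function, and on a compact metric space
this determines a finite Borel measure.
-/

open MeasureTheory Metric

theorem ContinuousLinearMap.sSup_image_unitClosedBall_eq_norm {E : Type*}
    [NormedAddCommGroup E] [NormedSpace ℝ E] (φ : E →L[ℝ] ℝ) :
    sSup (φ '' closedBall 0 1) = ‖φ‖ := by
  refine csSup_eq_of_forall_le_of_forall_lt_exists_gt
    ((nonempty_closedBall.mpr zero_le_one).image _) ?_ fun r hr => ?_
  · rintro - ⟨x, hx, rfl⟩
    exact (Real.le_norm_self _).trans (φ.unit_le_opNorm x (mem_closedBall_zero_iff.1 hx))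
  · obtain ⟨x, hx, hrx⟩ := φ.exists_lt_apply_of_lt_opNorm hr
    rcases le_total 0 (φ x) with hφx | hφx
    · refine ⟨φ x, ⟨x, mem_closedBall_zero_iff.2 hx.le, rfl⟩, ?_⟩
      rwa [Real.norm_of_nonneg hφx] at hrx
    · refine ⟨φ (-x), ⟨-x, by simpa using hx.le, rfl⟩, ?_⟩
      rwa [Real.norm_of_nonpos hφx, ← map_neg] at hrx

theorem ContinuousLinearMap.comp_eq_zero_iff_of_denseRange {R E F G : Type*} [Semiring R]
    [TopologicalSpace E] [AddCommMonoid E] [Module R E]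
    [TopologicalSpace F] [AddCommMonoid F] [Module R F]
    [TopologicalSpace G] [AddCommMonoid G] [Module R G] [T2Space G]
    {L : F →L[R] G} {ι : E →L[R] F} (hι : DenseRange ι) : L ∘L ι = 0 ↔ L = 0 := by
  refine ⟨fun h => DFunLike.coe_injective ?_, fun h => by rw [h, zero_comp]⟩
  exact hι.equalizer L.continuous continuous_zero (congrArg DFunLike.coe h)

namespace ContinuousMap

variable {X : Type*} [TopologicalSpace X] [CompactSpace X] [MeasurableSpace X]

theorem integrable [OpensMeasurableSpace X] (f : C(X, ℝ)) (μ : Measure X) [IsFiniteMeasure μ] :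
    Integrable f μ :=
  f.continuous.integrable_of_hasCompactSupport (HasCompactSupport.of_compactSpace f)

noncomputable def integralCLM [OpensMeasurableSpace X] (μ : Measure X) [IsFiniteMeasure μ] :
    C(X, ℝ) →L[ℝ] ℝ :=
  LinearMap.mkContinuous
    { toFun := fun f => ∫ x, f x ∂μ
      map_add' := fun f g => integral_add (f.integrable μ) (g.integrable μ)
      map_smul' := fun c f => integral_const_mul c _ }
    (μ.real Set.univ) fun f => by
      simpa using (BoundedContinuousFunction.mkOfCompact f).norm_integral_le_mul_norm μ

@[simp]
theorem integralCLM_apply [OpensMeasurableSpace X] (μ : Measure X) [IsFiniteMeasure μ]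
    (f : C(X, ℝ)) : integralCLM μ f = ∫ x, f x ∂μ :=
  rfl

theorem integralCLM_inj [HasOuterApproxClosed X] [BorelSpace X] {μ ν : Measure X}
    [IsFiniteMeasure μ] [IsFiniteMeasure ν] : integralCLM μ = integralCLM ν ↔ μ = ν := by
  refine ⟨fun h => ext_of_forall_integral_eq_of_IsFiniteMeasure fun f => ?_,
    fun h => by subst h; rfl⟩
  exact DFunLike.congr_fun h f.toContinuousMap

end ContinuousMap

theorem mmd_unit_ball_eq_zero_iff_general
    {X : Type*} [MetricSpace X] [CompactSpace X] [MeasurableSpace X] [BorelSpace X]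
    {H : Type*} [NormedAddCommGroup H] [InnerProductSpace ℝ H]
    (ι : H →L[ℝ] C(X, ℝ)) (hdense : DenseRange ι)
    (p q : Measure X) [IsProbabilityMeasure p] [IsProbabilityMeasure q] :
    sSup {r : ℝ | ∃ f : H, ‖f‖ ≤ 1 ∧ r = (∫ x, ι f x ∂p) - ∫ x, ι f x ∂q} = 0 ↔ p = q := by
  have hmmd : {r : ℝ | ∃ f : H, ‖f‖ ≤ 1 ∧ r = (∫ x, ι f x ∂p) - ∫ x, ι f x ∂q} =
      ((ContinuousMap.integralCLM p - ContinuousMap.integralCLM q) ∘L ι) '' closedBall 0 1 := by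
    ext
    simp [eq_comm]
  rw [hmmd, ContinuousLinearMap.sSup_image_unitClosedBall_eq_norm, norm_eq_zero,
    ContinuousLinearMap.comp_eq_zero_iff_of_denseRange hdense, sub_eq_zero,
    ContinuousMap.integralCLM_inj]

/-- For a universal RKHS `H` (continuously included in `C(X)` with dense
range) on a compact metric space `X`, the MMD over the unit ball of `H` vanishes iff
the two Borel probability measures coincide. -/
theorem mmd_unit_ball_eq_zero_iff
    {X : Type*} [MetricSpace X] [CompactSpace X] [MeasurableSpace X] [BorelSpace X]
    {H : Type*} [NormedAddCommGroup H] [InnerProductSpace ℝ H] [CompleteSpace H]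
    (ι : H →L[ℝ] C(X, ℝ)) (hdense : DenseRange ι)
    (p q : Measure X) [IsProbabilityMeasure p] [IsProbabilityMeasure q] :
    sSup {r : ℝ | ∃ f : H, ‖f‖ ≤ 1 ∧ r = (∫ x, ι f x ∂p) - ∫ x, ι f x ∂q} = 0 ↔ p = q :=
  mmd_unit_ball_eq_zero_iff_general ι hdense p q
end

section
/- For i.i.d. samples Z = (z_1,…,z_m) with z_i = (x_i, y_i), x_i ∼ p, y_i ∼ q, the statistic MMD_u²[X,Y] := (1/(m(m−1))) Σ_{i≠j} h(z_i,z_j), where h(z,z') := k(x,x') + k(y,y') − k(x,y') − k(x',y), is an unbiased estimator of MMD²[F,p,q] = E k(x,x') − 2E k(x,y) + E k(y,y'). -/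
/-!
Distinct coordinates of a product measure are independent, so every off-diagonal pair
`(z i, z j)` of the sample has law `μ ⊗ μ` and the expected double sum is `m (m - 1)` times
`E h(z, z')` for independent `z, z' ∼ μ`. Each of the four terms of `h` is `k` evaluated on a
pair with law `p ⊗ p`, `q ⊗ q` or `p ⊗ q`; the cross term `k(x', y)` becomes one of law
`p ⊗ q` after swapping `z` and `z'`.
-/

open MeasureTheory ProbabilityTheory Finset Function

theorem MeasureTheory.MeasurePreserving.integral_comp_of_aestronglyMeasurable
    {α β E : Type*} [MeasurableSpace α] [MeasurableSpace β] [NormedAddCommGroup E]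
    [NormedSpace ℝ E] {μ : Measure α} {ν : Measure β} {f : α → β}
    (hf : MeasurePreserving f μ ν) {g : β → E} (hg : AEStronglyMeasurable g ν) :
    ∫ x, g (f x) ∂μ = ∫ y, g y ∂ν := by
  rw [← hf.map_eq] at hg ⊢
  exact (integral_map hf.measurable.aemeasurable hg).symm

theorem MeasureTheory.measurePreserving_pi_eval_prod {ι : Type*} [Fintype ι] {α : ι → Type*}
    [∀ i, MeasurableSpace (α i)] (μ : ∀ i, Measure (α i)) [∀ i, IsProbabilityMeasure (μ i)]
    {i j : ι} (hij : i ≠ j) :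
    MeasurePreserving (fun z : ∀ i, α i => (z i, z j)) (Measure.pi μ) ((μ i).prod (μ j)) := by
  refine ⟨by fun_prop, ?_⟩
  have hindep : IndepFun (fun z : ∀ i, α i => z i) (fun z => z j) (Measure.pi μ) :=
    (iIndepFun_pi (X := fun _ => id) fun _ => aemeasurable_id).indepFun hij
  rw [hindep.map_prod_eq_prod_map_map (measurable_pi_apply i).aemeasurable
    (measurable_pi_apply j).aemeasurable,
    (measurePreserving_eval μ i).map_eq, (measurePreserving_eval μ j).map_eq]

theorem MeasureTheory.integral_sum_sum_ite_ne_pi {ι α E : Type*} [Fintype ι] [DecidableEq ι]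
    [MeasurableSpace α] [NormedAddCommGroup E] [NormedSpace ℝ E]
    (μ : Measure α) [IsProbabilityMeasure μ] {g : α → α → E}
    (hg : Integrable (uncurry g) (μ.prod μ)) :
    ∫ z, ∑ i : ι, ∑ j : ι, (if i ≠ j then g (z i) (z j) else 0) ∂(Measure.pi fun _ => μ)
      = (Fintype.card ι * (Fintype.card ι - 1)) • ∫ w, uncurry g w ∂(μ.prod μ) := by
  have hpair {i j : ι} (hij : i ≠ j) := measurePreserving_pi_eval_prod (fun _ => μ) hij
  have hint (i j : ι) :
      Integrable (fun z => if i ≠ j then g (z i) (z j) else 0) (Measure.pi fun _ => μ) := by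
    split_ifs with hij
    · exact (hpair hij).integrable_comp_of_integrable hg
    · exact integrable_zero _ _ _
  have hterm (i j : ι) : ∫ z, (if i ≠ j then g (z i) (z j) else 0) ∂(Measure.pi fun _ => μ)
      = if i ≠ j then ∫ w, uncurry g w ∂(μ.prod μ) else 0 := by
    split_ifs with hij
    · exact (hpair hij).integral_comp_of_aestronglyMeasurable hg.aestronglyMeasurable
    · exact integral_zero _ _
  rw [integral_finsetSum _ fun i _ => integrable_finsetSum _ fun j _ => hint i j]
  simp_rw [integral_finsetSum _ fun j _ => hint _ j, hterm]
  simp [sum_ite, filter_ne, mul_smul]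

section MMD

variable {X : Type*} [MeasurableSpace X] (k : X → X → ℝ) {p q : Measure X}
  {μ : Measure (X × X)} [SFinite μ]

def mmdKernel (z z' : X × X) : ℝ := k z.1 z'.1 + k z.2 z'.2 - k z.1 z'.2 - k z'.1 z.2

variable {k}

theorem integrable_mmdKernel (hp : MeasurePreserving Prod.fst μ p)
    (hq : MeasurePreserving Prod.snd μ q) (hpp : Integrable (uncurry k) (p.prod p))
    (hpq : Integrable (uncurry k) (p.prod q)) (hqq : Integrable (uncurry k) (q.prod q)) :
    Integrable (uncurry (mmdKernel k)) (μ.prod μ) :=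
  ((((hp.prod hp).integrable_comp_of_integrable hpp).add
    ((hq.prod hq).integrable_comp_of_integrable hqq)).sub
    ((hp.prod hq).integrable_comp_of_integrable hpq)).sub
    (((hp.prod hq).comp Measure.measurePreserving_swap).integrable_comp_of_integrable hpq)

theorem integral_mmdKernel (hp : MeasurePreserving Prod.fst μ p)
    (hq : MeasurePreserving Prod.snd μ q) (hpp : Integrable (uncurry k) (p.prod p))
    (hpq : Integrable (uncurry k) (p.prod q)) (hqq : Integrable (uncurry k) (q.prod q)) :
    ∫ w, uncurry (mmdKernel k) w ∂(μ.prod μ)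
    = ∫ w, uncurry k w ∂(p.prod p) - 2 * ∫ w, uncurry k w ∂(p.prod q)
      + ∫ w, uncurry k w ∂(q.prod q) := by
  have pullback {ν : Measure (X × X)} {f : (X × X) × (X × X) → X × X}
      (hf : MeasurePreserving f (μ.prod μ) ν) (hk : Integrable (uncurry k) ν) :
      Integrable (uncurry k ∘ f) (μ.prod μ) ∧
        ∫ w, (uncurry k ∘ f) w ∂(μ.prod μ) = ∫ w, uncurry k w ∂ν :=
    ⟨hf.integrable_comp_of_integrable hk, hf.integral_comp_of_aestronglyMeasurable hk.1⟩
  obtain ⟨ipp, Ipp⟩ := pullback (hp.prod hp) hpp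
  obtain ⟨iqq, Iqq⟩ := pullback (hq.prod hq) hqq
  obtain ⟨ipq, Ipq⟩ := pullback (hp.prod hq) hpq
  obtain ⟨iqp, Iqp⟩ := pullback ((hp.prod hq).comp Measure.measurePreserving_swap) hpq
  have hsplit : uncurry (mmdKernel k) = uncurry k ∘ Prod.map Prod.fst Prod.fst
      + uncurry k ∘ Prod.map Prod.snd Prod.snd - uncurry k ∘ Prod.map Prod.fst Prod.snd
      - uncurry k ∘ (Prod.map Prod.fst Prod.snd ∘ Prod.swap) := rfl
  rw [hsplit, integral_sub' ((ipp.add iqq).sub ipq) iqp, integral_sub' (ipp.add iqq) ipq,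
    integral_add' ipp iqq, Ipp, Iqq, Ipq, Iqp]
  ring

end MMD

theorem mmd_u_sq_unbiased_general
    {X : Type*} [MeasurableSpace X] (k : X → X → ℝ)
    (p q : Measure X)
    (μ : Measure (X × X)) [IsProbabilityMeasure μ]
    (hfst : μ.map Prod.fst = p) (hsnd : μ.map Prod.snd = q)
    (hpp : Integrable (fun w : X × X => k w.1 w.2) (p.prod p))
    (hpq : Integrable (fun w : X × X => k w.1 w.2) (p.prod q))
    (hqq : Integrable (fun w : X × X => k w.1 w.2) (q.prod q))
    (m : ℕ) (hm : 2 ≤ m) :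
    (∫ z : Fin m → X × X,
        (1 / ((m : ℝ) * ((m : ℝ) - 1))) *
          ∑ i : Fin m, ∑ j : Fin m,
            if i ≠ j then
              k (z i).1 (z j).1 + k (z i).2 (z j).2
                - k (z i).1 (z j).2 - k (z j).1 (z i).2
            else 0
        ∂(Measure.pi fun _ => μ))
      = (∫ w, k w.1 w.2 ∂p.prod p) - 2 * (∫ w, k w.1 w.2 ∂p.prod q)
        + ∫ w, k w.1 w.2 ∂q.prod q := by
  have hp : MeasurePreserving Prod.fst μ p := ⟨measurable_fst, hfst⟩
  have hq : MeasurePreserving Prod.snd μ q := ⟨measurable_snd, hsnd⟩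
  have hm₁ : (m : ℝ) - 1 ≠ 0 := by
    rw [sub_ne_zero, Nat.cast_ne_one]
    omega
  have hm₀ : (m : ℝ) ≠ 0 := Nat.cast_ne_zero.mpr (by omega)
  rw [← uncurry_def] at hpp hpq hqq ⊢
  calc _ = 1 / ((m : ℝ) * ((m : ℝ) - 1)) * ∫ z, ∑ i : Fin m, ∑ j : Fin m,
        (if i ≠ j then mmdKernel k (z i) (z j) else 0) ∂(Measure.pi fun _ => μ) :=
      integral_const_mul _ _
    _ = _ := by
      rw [integral_sum_sum_ite_ne_pi μ (integrable_mmdKernel hp hq hpp hpq hqq),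
        integral_mmdKernel hp hq hpp hpq hqq, Fintype.card_fin, nsmul_eq_mul,
        Nat.cast_mul, Nat.cast_pred (by omega)]
      field_simp

/-- The quadratic-time statistic `MMD_u²` is an unbiased estimator of
`E k(x,x') - 2 E k(x,y) + E k(y,y')`, for i.i.d. pairs `z_i = (x_i, y_i)` with
`x_i ∼ p`, `y_i ∼ q`. -/
theorem mmd_u_sq_unbiased
    {X : Type*} [MeasurableSpace X] (k : X → X → ℝ)
    (hk : Measurable fun w : X × X => k w.1 w.2)
    (p q : Measure X) [IsProbabilityMeasure p] [IsProbabilityMeasure q]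
    (μ : Measure (X × X)) [IsProbabilityMeasure μ]
    (hfst : μ.map Prod.fst = p) (hsnd : μ.map Prod.snd = q)
    (hpp : Integrable (fun w : X × X => k w.1 w.2) (p.prod p))
    (hpq : Integrable (fun w : X × X => k w.1 w.2) (p.prod q))
    (hqq : Integrable (fun w : X × X => k w.1 w.2) (q.prod q))
    (m : ℕ) (hm : 2 ≤ m) :
    (∫ z : Fin m → X × X,
        (1 / ((m : ℝ) * ((m : ℝ) - 1))) *
          ∑ i : Fin m, ∑ j : Fin m,
            if i ≠ j then
              k (z i).1 (z j).1 + k (z i).2 (z j).2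
                - k (z i).1 (z j).2 - k (z j).1 (z i).2
            else 0
        ∂(Measure.pi fun _ => μ))
      = (∫ w, k w.1 w.2 ∂p.prod p) - 2 * (∫ w, k w.1 w.2 ∂p.prod q)
        + ∫ w, k w.1 w.2 ∂q.prod q :=
  mmd_u_sq_unbiased_general k p q μ hfst hsnd hpp hpq hqq m hm
end

section
/- (McDiarmid bound for the biased MMD) Let k be a kernel with 0 ≤ k(x,y) ≤ K, F the unit ball of the associated RKHS, X an m-sample from p and Y an n-sample from q, all independent. Define Δ(p,q,X,Y) := sup_{f∈F} |E_p f − E_q f − (1/m)Σ f(x_i) + (1/n)Σ f(y_j)|. Then changing a single x_i changes Δ by at most 2√K/m, and changing a single y_j changes Δ by at most 2√K/n; consequently, by McDiarmid's inequality, Pr{Δ − E[Δ] > ε} ≤ exp(−ε² m n / (2K(m+n))). -/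
/-!
By Cauchy–Schwarz, the supremum of `|⟪f, v⟫|` over the unit ball is `‖v‖`, so `Δ` is the norm of
the vector `(μ_p - μ_q) - (μ̂_X - μ̂_Y)` of differences of (empirical) mean embeddings. Replacing
one sample point moves this vector by `(φ x - φ x') / m` (or `/ n`), of norm at most `2√K / m`,
which gives the bounded differences.

McDiarmid's inequality is proved in sub-Gaussian form: integrating out one coordinate at a time,
Hoeffding's lemma bounds the mgf in that coordinate by `exp (c_i² t² / 8)` uniformly in the
others, and Fubini multiplies these bounds. The Chernoff bound then gives the tail estimate.
-/

open MeasureTheory Real ProbabilityTheory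
open scoped RealInnerProductSpace NNReal

universe u

lemma exists_forall_mem_Icc_of_sub_le {α : Type*} [Nonempty α] {h : α → ℝ} {c : ℝ}
    (hc : ∀ x x', h x - h x' ≤ c) : ∃ a, ∀ x, h x ∈ Set.Icc a (a + c) := by
  obtain ⟨x₀⟩ := ‹Nonempty α›
  have hbdd : BddBelow (Set.range h) := ⟨h x₀ - c, by rintro _ ⟨x, rfl⟩; linarith [hc x₀ x]⟩
  refine ⟨⨅ x, h x, fun x => ⟨ciInf_le hbdd x, ?_⟩⟩
  have : h x - c ≤ ⨅ x', h x' := le_ciInf fun x' => by linarith [hc x x']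
  linarith

namespace ProbabilityTheory

lemma hasSubgaussianMGF_sub_integral_of_sub_le {α : Type*} [MeasurableSpace α] {μ : Measure α}
    [IsProbabilityMeasure μ] {h : α → ℝ} {c : ℝ≥0} (hh : AEMeasurable h μ)
    (hc : ∀ x x', h x - h x' ≤ c) :
    HasSubgaussianMGF (fun x => h x - ∫ x, h x ∂μ) (c ^ 2 / 4) μ := by
  have := nonempty_of_isProbabilityMeasure μ
  obtain ⟨a, ha⟩ := exists_forall_mem_Icc_of_sub_le hc
  convert hasSubgaussianMGF_of_mem_Icc hh (ae_of_all μ ha) using 1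
  ext
  simp [div_pow]
  norm_num

lemma integral_sub_integral_le_of_sub_le {α : Type*} [MeasurableSpace α] {μ : Measure α}
    [IsProbabilityMeasure μ] {f g : α → ℝ} (hf : Integrable f μ) (hg : Integrable g μ) {c : ℝ}
    (h : ∀ x, f x - g x ≤ c) : ∫ x, f x ∂μ - ∫ x, g x ∂μ ≤ c := by
  rw [← integral_sub hf hg]
  simpa using integral_mono (hf.sub hg) (integrable_const c) h

lemma HasSubgaussianMGF.prod_of_forall_section {α β : Type*} [MeasurableSpace α]
    [MeasurableSpace β] {μ : Measure α} {ν : Measure β} [IsProbabilityMeasure μ]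
    [IsProbabilityMeasure ν] {F : α × β → ℝ} (hF : StronglyMeasurable F) {cX cY : ℝ≥0}
    (hsec : ∀ y, HasSubgaussianMGF (fun x => F (x, y) - ∫ x', F (x', y) ∂μ) cX μ)
    (hG : HasSubgaussianMGF (fun y => ∫ x, F (x, y) ∂μ - ∫ y, ∫ x, F (x, y) ∂μ ∂ν) cY ν) :
    HasSubgaussianMGF (fun z => F z - ∫ z, F z ∂(μ.prod ν)) (cX + cY) (μ.prod ν) := by
  set G : β → ℝ := fun y => ∫ x, F (x, y) ∂μ
  set I : ℝ := ∫ y, G y ∂ν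
  have hsplit : ∀ t x y,
      exp (t * (F (x, y) - I)) = exp (t * (F (x, y) - G y)) * exp (t * (G y - I)) := by
    intro t x y
    rw [← exp_add]
    ring_nf
  have hinner : ∀ t y,
      ∫ x, exp (t * (F (x, y) - I)) ∂μ ≤ exp (cX * t ^ 2 / 2) * exp (t * (G y - I)) := by
    intro t y
    simp_rw [hsplit t, integral_mul_const]
    gcongr
    exact (hsec y).mgf_le t
  have hint : ∀ t, Integrable (fun z => exp (t * (F z - I))) (μ.prod ν) := by
    intro t
    have hm : StronglyMeasurable fun z => exp (t * (F z - I)) := by fun_prop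
    rw [integrable_prod_iff' hm.aestronglyMeasurable]
    refine ⟨ae_of_all _ fun y => ?_, ?_⟩
    · simp_rw [hsplit t]
      exact ((hsec y).integrable_exp_mul t).mul_const _
    · refine ((hG.integrable_exp_mul t).const_mul (exp (cX * t ^ 2 / 2))).mono'
        hm.norm.integral_prod_left'.aestronglyMeasurable (ae_of_all _ fun y => ?_)
      simp only [Real.norm_eq_abs, abs_exp]
      rw [abs_of_nonneg (integral_nonneg fun x => (exp_pos _).le)]
      exact hinner t y
  have hcentered : HasSubgaussianMGF (fun z => F z - I) (cX + cY) (μ.prod ν) := by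
    refine ⟨hint, fun t => ?_⟩
    calc mgf (fun z => F z - I) (μ.prod ν) t
        = ∫ y, ∫ x, exp (t * (F (x, y) - I)) ∂μ ∂ν := integral_prod_symm _ (hint t)
      _ ≤ ∫ y, exp (cX * t ^ 2 / 2) * exp (t * (G y - I)) ∂ν :=
          integral_mono_of_nonneg (ae_of_all _ fun y => integral_nonneg fun x => (exp_pos _).le)
            ((hG.integrable_exp_mul t).const_mul _) (ae_of_all _ (hinner t))
      _ = exp (cX * t ^ 2 / 2) * mgf (fun y => G y - I) ν t := integral_const_mul _ _
      _ ≤ exp (cX * t ^ 2 / 2) * exp (cY * t ^ 2 / 2) := by gcongr; exact hG.mgf_le t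
      _ = exp (↑(cX + cY) * t ^ 2 / 2) := by rw [← exp_add]; push_cast; ring_nf
  have hFI : ∫ z, F z ∂(μ.prod ν) = I := integral_prod_symm F <| by
    simpa [sub_eq_add_neg, integrable_add_const_iff] using hcentered.integrable
  rwa [hFI]

lemma HasSubgaussianMGF.sub_integral_of_measurePreserving {α β : Type*} [MeasurableSpace α]
    [MeasurableSpace β] {μ : Measure α} {ν : Measure β} {c : ℝ≥0} (e : α ≃ᵐ β)
    (he : MeasurePreserving e μ ν) {f : β → ℝ}
    (h : HasSubgaussianMGF (fun x => f (e x) - ∫ x, f (e x) ∂μ) c μ) :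
    HasSubgaussianMGF (fun y => f y - ∫ y, f y ∂ν) c ν := by
  rw [he.integral_comp' f, ← (he.symm e).map_eq] at h
  simpa [Function.comp_def] using h.of_map e.symm.measurable.aemeasurable

theorem hasSubgaussianMGF_pi_fin_of_forall_sub_le (N : ℕ) {Ω : Fin N → Type u}
    [∀ i, MeasurableSpace (Ω i)] (μ : ∀ i, Measure (Ω i)) [∀ i, IsProbabilityMeasure (μ i)]
    {f : (∀ i, Ω i) → ℝ} (hf : StronglyMeasurable f) (c : Fin N → ℝ≥0)
    (hc : ∀ x x' i, (∀ j, j ≠ i → x j = x' j) → f x - f x' ≤ c i) :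
    HasSubgaussianMGF (fun x => f x - ∫ x, f x ∂Measure.pi μ) (∑ i, c i ^ 2 / 4)
      (Measure.pi μ) := by
  induction N with
  | zero =>
    let x₀ : ∀ i, Ω i := fun i => i.elim0
    have hconst : ∀ x, f x = f x₀ := fun x => congrArg f (Subsingleton.elim x x₀)
    simp [hconst]
  | succ N ih =>
    let e := MeasurableEquiv.piFinSuccAbove Ω 0
    have he : MeasurePreserving e.symm
        ((μ 0).prod (Measure.pi fun i => μ (Fin.succAbove 0 i))) (Measure.pi μ) :=
      (measurePreserving_piFinSuccAbove μ 0).symm e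
    let F : Ω 0 × (∀ i, Ω (Fin.succAbove 0 i)) → ℝ := fun z => f (e.symm z)
    have hF : StronglyMeasurable F := hf.comp_measurable e.symm.measurable
    have hFapply : ∀ a y, F (a, y) = f (Fin.insertNth 0 a y) := fun a y => rfl
    have hsec : ∀ y, HasSubgaussianMGF (fun a => F (a, y) - ∫ a', F (a', y) ∂μ 0)
        (c 0 ^ 2 / 4) (μ 0) := fun y =>
      hasSubgaussianMGF_sub_integral_of_sub_le
        (hF.comp_measurable measurable_prodMk_right).measurable.aemeasurable
        fun a a' => by
          rw [hFapply, hFapply]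
          refine hc _ _ 0 fun j hj => ?_
          obtain ⟨k, rfl⟩ := Fin.exists_succAbove_eq hj
          simp only [Fin.insertNth_apply_succAbove]
    have hint : ∀ y, Integrable (fun a => F (a, y)) (μ 0) := fun y => by
      simpa [sub_eq_add_neg, integrable_add_const_iff] using (hsec y).integrable
    have hGc : ∀ y y' i, (∀ j, j ≠ i → y j = y' j) →
        ∫ a, F (a, y) ∂μ 0 - ∫ a, F (a, y') ∂μ 0 ≤ c (Fin.succAbove 0 i) := by
      intro y y' i hyy'
      refine integral_sub_integral_le_of_sub_le (hint y) (hint y') fun a => ?_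
      rw [hFapply, hFapply]
      refine hc _ _ _ fun j hj => ?_
      rcases eq_or_ne j 0 with rfl | hj0
      · simp only [Fin.insertNth_apply_same]
      · obtain ⟨k, rfl⟩ := Fin.exists_succAbove_eq hj0
        simp only [Fin.insertNth_apply_succAbove]
        exact hyy' k fun hki => hj (hki ▸ rfl)
    have hG := ih (fun i => μ (Fin.succAbove 0 i)) hF.integral_prod_left' _ hGc
    have := (HasSubgaussianMGF.prod_of_forall_section hF hsec hG).sub_integral_of_measurePreserving
      e.symm he
    simpa [F, Fin.sum_univ_succAbove _ 0] using this

theorem hasSubgaussianMGF_pi_of_forall_sub_le {ι : Type*} [Fintype ι] {Ω : ι → Type u}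
    [∀ i, MeasurableSpace (Ω i)] (μ : ∀ i, Measure (Ω i)) [∀ i, IsProbabilityMeasure (μ i)]
    {f : (∀ i, Ω i) → ℝ} (hf : StronglyMeasurable f) (c : ι → ℝ≥0)
    (hc : ∀ x x' i, (∀ j, j ≠ i → x j = x' j) → f x - f x' ≤ c i) :
    HasSubgaussianMGF (fun x => f x - ∫ x, f x ∂Measure.pi μ) (∑ i, c i ^ 2 / 4)
      (Measure.pi μ) := by
  let σ := (Fintype.equivFin ι).symm
  let e := MeasurableEquiv.piCongrLeft Ω σ
  have he : MeasurePreserving e (Measure.pi fun k => μ (σ k)) (Measure.pi μ) :=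
    measurePreserving_piCongrLeft μ σ
  have hfe : ∀ x k x', (∀ j, j ≠ k → x j = x' j) → ∀ i, i ≠ σ k → e x i = e x' i := by
    intro x k x' hxx' i hi
    obtain ⟨j, rfl⟩ := σ.surjective i
    simp only [e, MeasurableEquiv.coe_piCongrLeft, Equiv.piCongrLeft_apply_apply]
    exact hxx' j fun hjk => hi (hjk ▸ rfl)
  have h := hasSubgaussianMGF_pi_fin_of_forall_sub_le _ (fun k => μ (σ k))
    (hf.comp_measurable e.measurable) (fun k => c (σ k))
    fun x x' k hxx' => hc _ _ _ (hfe x k x' hxx')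
  rw [Equiv.sum_comp σ (fun i => c i ^ 2 / 4)] at h
  exact h.sub_integral_of_measurePreserving e he

lemma HasSubgaussianMGF.measure_add_lt_le {Ω : Type*} [MeasurableSpace Ω] {μ : Measure Ω}
    [IsFiniteMeasure μ] {f : Ω → ℝ} {a : ℝ} {c : ℝ≥0}
    (h : HasSubgaussianMGF (fun ω => f ω - a) c μ) {ε : ℝ} (hε : 0 ≤ ε) :
    μ {ω | a + ε < f ω} ≤ ENNReal.ofReal (exp (-ε ^ 2 / (2 * c))) :=
  calc μ {ω | a + ε < f ω} ≤ μ {ω | ε ≤ f ω - a} :=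
        measure_mono fun ω (hω : a + ε < f ω) => show ε ≤ f ω - a by linarith
    _ = ENNReal.ofReal (μ.real {ω | ε ≤ f ω - a}) := (ofReal_measureReal (measure_ne_top _ _)).symm
    _ ≤ ENNReal.ofReal (exp (-ε ^ 2 / (2 * c))) := ENNReal.ofReal_le_ofReal (h.measure_ge_le hε)

lemma HasSubgaussianMGF.sub_integral_congr {Ω : Type*} [MeasurableSpace Ω] {μ : Measure Ω}
    {f g : Ω → ℝ} {c : ℝ≥0} (h : HasSubgaussianMGF (fun ω => f ω - ∫ ω, f ω ∂μ) c μ)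
    (hfg : f =ᵐ[μ] g) : HasSubgaussianMGF (fun ω => g ω - ∫ ω, g ω ∂μ) c μ :=
  h.congr (hfg.mono fun ω hω => by dsimp only; rw [hω, integral_congr_ae hfg])

end ProbabilityTheory

section AEModification

variable {α E : Type*} [MeasurableSpace α] [NormedAddCommGroup E]

lemma exists_stronglyMeasurable_norm_le_ae_eq {μ : Measure α} {φ : α → E}
    (hφ : AEStronglyMeasurable φ μ) {r : ℝ} (hr : ∀ x, ‖φ x‖ ≤ r) :
    ∃ ψ : α → E, StronglyMeasurable ψ ∧ (∀ x, ‖ψ x‖ ≤ r) ∧ φ =ᵐ[μ] ψ := by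
  let S := {x | ‖hφ.mk φ x‖ ≤ r}
  have hS : MeasurableSet S :=
    measurableSet_le hφ.stronglyMeasurable_mk.norm.measurable measurable_const
  refine ⟨S.piecewise (hφ.mk φ) 0, hφ.stronglyMeasurable_mk.piecewise hS stronglyMeasurable_const,
    fun x => ?_, ?_⟩
  · by_cases hx : x ∈ S
    · rw [Set.piecewise_eq_of_mem _ _ _ hx]
      exact hx
    · simpa [Set.piecewise_eq_of_notMem _ _ _ hx] using (norm_nonneg _).trans (hr x)
  · filter_upwards [hφ.ae_eq_mk] with x hx
    have hxS : x ∈ S := by simpa [S, ← hx] using hr x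
    rw [Set.piecewise_eq_of_mem _ _ _ hxS, hx]

lemma ae_pi_forall_apply_eq_of_ae_eq {ι β : Type*} [Fintype ι] {μ : Measure α} [SigmaFinite μ]
    {f g : α → β} (h : f =ᵐ[μ] g) :
    ∀ᵐ xs ∂(Measure.pi fun _ : ι => μ), ∀ i, f (xs i) = g (xs i) :=
  ae_all_iff.2 fun i => (Measure.tendsto_eval_ae_ae (μ := fun _ : ι => μ) (i := i)).eventually h

end AEModification

lemma sSup_abs_inner_eq_norm {H : Type*} [NormedAddCommGroup H] [InnerProductSpace ℝ H] (v : H) :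
    sSup {r : ℝ | ∃ f : H, ‖f‖ ≤ 1 ∧ r = |⟪f, v⟫|} = ‖v‖ := by
  have hub : ∀ r ∈ {r : ℝ | ∃ f : H, ‖f‖ ≤ 1 ∧ r = |⟪f, v⟫|}, r ≤ ‖v‖ := by
    rintro r ⟨f, hf, rfl⟩
    calc |⟪f, v⟫| ≤ ‖f‖ * ‖v‖ := abs_real_inner_le_norm f v
      _ ≤ ‖v‖ := mul_le_of_le_one_left (norm_nonneg v) hf
  have hmem : ‖v‖ ∈ {r : ℝ | ∃ f : H, ‖f‖ ≤ 1 ∧ r = |⟪f, v⟫|} := by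
    rcases eq_or_ne v 0 with rfl | hv
    · exact ⟨0, by simp⟩
    · refine ⟨‖v‖⁻¹ • v, by simp [norm_smul, hv], ?_⟩
      rw [real_inner_smul_left, real_inner_self_eq_norm_sq, abs_of_nonneg (by positivity)]
      field_simp
  exact le_antisymm (csSup_le ⟨_, hmem⟩ hub) (le_csSup ⟨‖v‖, hub⟩ hmem)

lemma norm_sum_sub_sum_le_of_eq_off {E ι : Type*} [SeminormedAddCommGroup E] [Fintype ι]
    {u u' : ι → E} {i : ι} (h : ∀ j, j ≠ i → u j = u' j) {r : ℝ} (hu : ‖u i‖ ≤ r)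
    (hu' : ‖u' i‖ ≤ r) : ‖∑ j, u j - ∑ j, u' j‖ ≤ 2 * r := by
  rw [← Finset.sum_sub_distrib,
    Finset.sum_eq_single i (fun j _ hj => by rw [h j hj, sub_self]) (by simp)]
  linarith [norm_sub_le (u i) (u' i)]

section MMD

variable {X E : Type*} [NormedAddCommGroup E] [NormedSpace ℝ E] {m n : ℕ}

noncomputable def mmdDeviation (ψ : X → E) (C : E) (xs : Fin m → X) (ys : Fin n → X) : E :=
  C - (1 / (m : ℝ)) • ∑ i, ψ (xs i) + (1 / (n : ℝ)) • ∑ j, ψ (ys j)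

lemma inner_mmdDeviation {H : Type*} [NormedAddCommGroup H] [InnerProductSpace ℝ H]
    [CompleteSpace H] [MeasurableSpace X] {φ : X → H} {p q : Measure X}
    (hp : Integrable φ p) (hq : Integrable φ q) (f : H) (xs : Fin m → X) (ys : Fin n → X) :
    ⟪f, mmdDeviation φ (∫ x, φ x ∂p - ∫ y, φ y ∂q) xs ys⟫ =
      (∫ x, ⟪f, φ x⟫ ∂p) - (∫ y, ⟪f, φ y⟫ ∂q) - (1 / (m : ℝ)) * ∑ i, ⟪f, φ (xs i)⟫
        + (1 / (n : ℝ)) * ∑ j, ⟪f, φ (ys j)⟫ := by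
  simp only [mmdDeviation, inner_add_right, inner_sub_right, inner_sum, real_inner_smul_right,
    integral_inner hp, integral_inner hq]

lemma abs_norm_mmdDeviation_sub_left_le {ψ : X → E} {r : ℝ} (hψ : ∀ x, ‖ψ x‖ ≤ r) (C : E)
    {xs xs' : Fin m → X} {i : Fin m} (h : ∀ j, j ≠ i → xs j = xs' j) (ys : Fin n → X) :
    |‖mmdDeviation ψ C xs ys‖ - ‖mmdDeviation ψ C xs' ys‖| ≤ 2 * r / m := by
  have hdiff : mmdDeviation ψ C xs ys - mmdDeviation ψ C xs' ys =
      (1 / (m : ℝ)) • (∑ j, ψ (xs' j) - ∑ j, ψ (xs j)) := by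
    simp only [mmdDeviation, smul_sub]
    abel
  calc _ ≤ ‖mmdDeviation ψ C xs ys - mmdDeviation ψ C xs' ys‖ := abs_norm_sub_norm_le _ _
    _ ≤ 1 / m * (2 * r) := by
      rw [hdiff, norm_smul, Real.norm_of_nonneg (by positivity)]
      gcongr
      exact norm_sum_sub_sum_le_of_eq_off (u := fun j => ψ (xs' j)) (fun j hj => by rw [h j hj])
        (hψ _) (hψ _)
    _ = 2 * r / m := by ring

lemma abs_norm_mmdDeviation_sub_right_le {ψ : X → E} {r : ℝ} (hψ : ∀ x, ‖ψ x‖ ≤ r) (C : E)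
    (xs : Fin m → X) {ys ys' : Fin n → X} {j : Fin n} (h : ∀ i, i ≠ j → ys i = ys' i) :
    |‖mmdDeviation ψ C xs ys‖ - ‖mmdDeviation ψ C xs ys'‖| ≤ 2 * r / n := by
  have hdiff : mmdDeviation ψ C xs ys - mmdDeviation ψ C xs ys' =
      (1 / (n : ℝ)) • (∑ i, ψ (ys i) - ∑ i, ψ (ys' i)) := by
    simp only [mmdDeviation, smul_sub]
    abel
  calc _ ≤ ‖mmdDeviation ψ C xs ys - mmdDeviation ψ C xs ys'‖ := abs_norm_sub_norm_le _ _
    _ ≤ 1 / n * (2 * r) := by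
      rw [hdiff, norm_smul, Real.norm_of_nonneg (by positivity)]
      gcongr
      exact norm_sum_sub_sum_le_of_eq_off (u := fun i => ψ (ys i)) (fun i hi => by rw [h i hi])
        (hψ _) (hψ _)
    _ = 2 * r / n := by ring

variable [MeasurableSpace X] (p q : Measure X)

lemma ae_mmdDeviation_eq [SigmaFinite p] [SigmaFinite q] {φ ψ : X → E} (hp : φ =ᵐ[p] ψ)
    (hq : φ =ᵐ[q] ψ) (C : E) :
    ∀ᵐ ω ∂((Measure.pi fun _ : Fin m => p).prod (Measure.pi fun _ : Fin n => q)),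
      mmdDeviation φ C ω.1 ω.2 = mmdDeviation ψ C ω.1 ω.2 := by
  filter_upwards [Measure.quasiMeasurePreserving_fst.ae (ae_pi_forall_apply_eq_of_ae_eq hp),
    Measure.quasiMeasurePreserving_snd.ae (ae_pi_forall_apply_eq_of_ae_eq hq)] with ω hxs hys
  simp [mmdDeviation, hxs, hys]

lemma hasSubgaussianMGF_norm_mmdDeviation [IsProbabilityMeasure p] [IsProbabilityMeasure q]
    {ψ : X → E} (hψ : StronglyMeasurable ψ) {r : ℝ≥0} (hr : ∀ x, ‖ψ x‖ ≤ r) (C : E) :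
    HasSubgaussianMGF
      (fun ω => ‖mmdDeviation ψ C ω.1 ω.2‖ - ∫ ω, ‖mmdDeviation ψ C ω.1 ω.2‖
        ∂((Measure.pi fun _ : Fin m => p).prod (Measure.pi fun _ : Fin n => q)))
      (r ^ 2 / m + r ^ 2 / n)
      ((Measure.pi fun _ : Fin m => p).prod (Measure.pi fun _ : Fin n => q)) := by
  let μ : Fin m ⊕ Fin n → Measure X := Sum.elim (fun _ => p) (fun _ => q)
  have : ∀ k, IsProbabilityMeasure (μ k) := by
    rintro (_ | _) <;> dsimp [μ] <;> infer_instance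
  let e := MeasurableEquiv.sumPiEquivProdPi (fun _ : Fin m ⊕ Fin n => X)
  have he : MeasurePreserving e (Measure.pi μ)
      ((Measure.pi fun _ : Fin m => p).prod (Measure.pi fun _ : Fin n => q)) :=
    measurePreserving_sumPiEquivProdPi μ
  let g : (Fin m → X) × (Fin n → X) → ℝ := fun ω => ‖mmdDeviation ψ C ω.1 ω.2‖
  have hg : StronglyMeasurable g := by
    simp only [g, mmdDeviation]
    fun_prop
  let c : Fin m ⊕ Fin n → ℝ≥0 := Sum.elim (fun _ => 2 * r / m) (fun _ => 2 * r / n)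
  have hc : ∀ x x' k, (∀ l, l ≠ k → x l = x' l) → g (e x) - g (e x') ≤ c k := by
    rintro x x' (i | j) hxx'
    · have hys : (fun j => x (.inr j)) = fun j => x' (.inr j) := funext fun j => hxx' _ (by simp)
      simp only [g, e, MeasurableEquiv.coe_sumPiEquivProdPi, Equiv.sumPiEquivProdPi_apply, hys]
      exact (le_abs_self _).trans <| abs_norm_mmdDeviation_sub_left_le hr C
        (fun l hl => hxx' _ (Sum.inl_injective.ne hl)) _
    · have hxs : (fun i => x (.inl i)) = fun i => x' (.inl i) := funext fun i => hxx' _ (by simp)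
      simp only [g, e, MeasurableEquiv.coe_sumPiEquivProdPi, Equiv.sumPiEquivProdPi_apply, hxs]
      exact (le_abs_self _).trans <| abs_norm_mmdDeviation_sub_right_le hr C _
        (fun l hl => hxx' _ (Sum.inr_injective.ne hl))
  have hsum : ∑ k, c k ^ 2 / 4 = r ^ 2 / m + r ^ 2 / n := by
    have hblock : ∀ k : ℕ, (k : ℝ≥0) * ((2 * r / k) ^ 2 / 4) = r ^ 2 / k := fun k => by
      rcases k.eq_zero_or_pos with rfl | hk
      · simp
      · field_simp
        ring
    simp [c, Fintype.sum_sum_type, hblock]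
  have h := hasSubgaussianMGF_pi_of_forall_sub_le μ (hg.comp_measurable e.measurable) c hc
  rw [hsum] at h
  exact h.sub_integral_of_measurePreserving e he

end MMD

theorem mmd_mcdiarmid_bound_general
    {X : Type*} [MeasurableSpace X] {H : Type*} [NormedAddCommGroup H]
    [InnerProductSpace ℝ H] [CompleteSpace H]
    (φ : X → H) (K : ℝ)
    (hkK : ∀ x y : X, ⟪φ x, φ y⟫ ≤ K)
    (p q : Measure X) [IsProbabilityMeasure p] [IsProbabilityMeasure q]
    (hp : Integrable φ p) (hq : Integrable φ q)
    (m n : ℕ) (hm : 1 ≤ m) (hn : 1 ≤ n)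
    (Δ : (Fin m → X) → (Fin n → X) → ℝ)
    (hΔ : ∀ Xs Ys, Δ Xs Ys =
      sSup {r : ℝ | ∃ f : H, ‖f‖ ≤ 1 ∧
        r = |(∫ x, ⟪f, φ x⟫ ∂p) - (∫ y, ⟪f, φ y⟫ ∂q)
              - (1 / (m : ℝ)) * ∑ i : Fin m, ⟪f, φ (Xs i)⟫
              + (1 / (n : ℝ)) * ∑ j : Fin n, ⟪f, φ (Ys j)⟫|}) :
    (∀ (Xs Xs' : Fin m → X) (Ys : Fin n → X) (i : Fin m),
        (∀ j : Fin m, j ≠ i → Xs j = Xs' j) →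
        |Δ Xs Ys - Δ Xs' Ys| ≤ 2 * Real.sqrt K / m)
    ∧ (∀ (Xs : Fin m → X) (Ys Ys' : Fin n → X) (j : Fin n),
        (∀ i : Fin n, i ≠ j → Ys i = Ys' i) →
        |Δ Xs Ys - Δ Xs Ys'| ≤ 2 * Real.sqrt K / n)
    ∧ (∀ ε : ℝ, 0 < ε →
        ((Measure.pi fun _ : Fin m => p).prod (Measure.pi fun _ : Fin n => q))
            {ω | (∫ ω', Δ ω'.1 ω'.2
                    ∂((Measure.pi fun _ : Fin m => p).prod
                      (Measure.pi fun _ : Fin n => q))) + ε < Δ ω.1 ω.2}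
          ≤ ENNReal.ofReal
              (Real.exp (-(ε ^ 2) * (m : ℝ) * (n : ℝ) / (2 * K * ((m : ℝ) + (n : ℝ))))))
    := by
  obtain ⟨x₀⟩ := nonempty_of_isProbabilityMeasure p
  have hK : 0 ≤ K := (real_inner_self_nonneg (x := φ x₀)).trans (hkK x₀ x₀)
  have hφ : ∀ x, ‖φ x‖ ≤ √K := fun x => by
    simpa using Real.abs_le_sqrt ((real_inner_self_eq_norm_sq (φ x)).symm.trans_le (hkK x x))
  have hΔC : ∀ Xs Ys, Δ Xs Ys = ‖mmdDeviation φ (∫ x, φ x ∂p - ∫ y, φ y ∂q) Xs Ys‖ :=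
    fun Xs Ys => by simp_rw [hΔ, ← inner_mmdDeviation hp hq, sSup_abs_inner_eq_norm]
  refine ⟨fun Xs Xs' Ys i h => ?_, fun Xs Ys Ys' j h => ?_, fun ε hε => ?_⟩
  · simpa only [hΔC] using abs_norm_mmdDeviation_sub_left_le hφ _ h Ys
  · simpa only [hΔC] using abs_norm_mmdDeviation_sub_right_le hφ _ Xs h
  -- `φ` need not be measurable, so McDiarmid is applied to a bounded measurable version of it.
  obtain ⟨ψ, hψ, hψK, hφψ⟩ := exists_stronglyMeasurable_norm_le_ae_eq (hp.1.add_measure hq.1) hφ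
  obtain ⟨r, hr⟩ : ∃ r : ℝ≥0, (r : ℝ) = √K := ⟨⟨√K, Real.sqrt_nonneg K⟩, rfl⟩
  have hsub := (hasSubgaussianMGF_norm_mmdDeviation p q hψ (fun x => (hψK x).trans_eq hr.symm)
    (∫ x, φ x ∂p - ∫ y, φ y ∂q)).sub_integral_congr (g := fun ω => Δ ω.1 ω.2) <|
      (ae_mmdDeviation_eq p q (ae_add_measure_iff.1 hφψ).1 (ae_add_measure_iff.1 hφψ).2 _).mono
        fun ω hω => by dsimp only; rw [hΔC, hω]
  refine (hsub.measure_add_lt_le hε.le).trans_eq ?_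
  have hm0 : (m : ℝ) ≠ 0 := Nat.cast_ne_zero.2 (by omega)
  have hn0 : (n : ℝ) ≠ 0 := Nat.cast_ne_zero.2 (by omega)
  have hvar : 2 * (K / m + K / n) = 2 * K * (m + n) / (m * n) := by
    field_simp
    ring
  push_cast
  rw [hr, Real.sq_sqrt hK, hvar, div_div_eq_mul_div]
  ring_nf

/-- Bounded differences of `Δ(p,q,X,Y)` and the resulting McDiarmid
concentration bound for the biased MMD deviation. -/
theorem mmd_mcdiarmid_bound
    {X : Type*} [MeasurableSpace X] {H : Type*} [NormedAddCommGroup H]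
    [InnerProductSpace ℝ H] [CompleteSpace H]
    (φ : X → H) (K : ℝ)
    (hk0 : ∀ x y : X, 0 ≤ ⟪φ x, φ y⟫) (hkK : ∀ x y : X, ⟪φ x, φ y⟫ ≤ K)
    (p q : Measure X) [IsProbabilityMeasure p] [IsProbabilityMeasure q]
    (hp : Integrable φ p) (hq : Integrable φ q)
    (m n : ℕ) (hm : 1 ≤ m) (hn : 1 ≤ n) (hK : 0 < K)
    (Δ : (Fin m → X) → (Fin n → X) → ℝ)
    (hΔ : ∀ Xs Ys, Δ Xs Ys =
      sSup {r : ℝ | ∃ f : H, ‖f‖ ≤ 1 ∧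
        r = |(∫ x, ⟪f, φ x⟫ ∂p) - (∫ y, ⟪f, φ y⟫ ∂q)
              - (1 / (m : ℝ)) * ∑ i : Fin m, ⟪f, φ (Xs i)⟫
              + (1 / (n : ℝ)) * ∑ j : Fin n, ⟪f, φ (Ys j)⟫|}) :
    (∀ (Xs Xs' : Fin m → X) (Ys : Fin n → X) (i : Fin m),
        (∀ j : Fin m, j ≠ i → Xs j = Xs' j) →
        |Δ Xs Ys - Δ Xs' Ys| ≤ 2 * Real.sqrt K / m)
    ∧ (∀ (Xs : Fin m → X) (Ys Ys' : Fin n → X) (j : Fin n),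
        (∀ i : Fin n, i ≠ j → Ys i = Ys' i) →
        |Δ Xs Ys - Δ Xs Ys'| ≤ 2 * Real.sqrt K / n)
    ∧ (∀ ε : ℝ, 0 < ε →
        ((Measure.pi fun _ : Fin m => p).prod (Measure.pi fun _ : Fin n => q))
            {ω | (∫ ω', Δ ω'.1 ω'.2
                    ∂((Measure.pi fun _ : Fin m => p).prod
                      (Measure.pi fun _ : Fin n => q))) + ε < Δ ω.1 ω.2}
          ≤ ENNReal.ofReal
              (Real.exp (-(ε ^ 2) * (m : ℝ) * (n : ℝ) / (2 * K * ((m : ℝ) + (n : ℝ)))))) :=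
  mmd_mcdiarmid_bound_general φ K hkK p q hp hq m n hm hn Δ hΔ
end

section
/- (Rademacher average bound for RKHS unit ball) Let H be an RKHS with kernel k satisfying 0 ≤ k(x,x) ≤ K for all x, F its unit ball, x_1,…,x_m points in X, and σ_1,…,σ_m i.i.d. uniform on {−1,+1}. Then E_σ sup_{f∈F} |(1/m) Σ_{i=1}^m σ_i f(x_i)| ≤ √(K/m). -/
/-!
Since `f ↦ (1/m) ∑ σᵢ ⟪f, φ xᵢ⟫` is the functional `⟪·, v σ⟫ / m` with `v σ = ∑ σᵢ • φ xᵢ`,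
the supremum over the unit ball is at most `‖v σ‖ / m`. By Jensen, `E ‖v‖ ≤ √(E ‖v‖²)`, and
since the signs are independent and centred, `E ‖v‖² = ∑ ‖φ xᵢ‖² ≤ m K`.
-/

open MeasureTheory ProbabilityTheory
open scoped RealInnerProductSpace

def boolSign (b : Bool) : ℝ := if b then 1 else -1

lemma boolSign_mul_self (b : Bool) : boolSign b * boolSign b = 1 := by
  cases b <;> norm_num [boolSign]

noncomputable abbrev rademacherMeasure (ι : Type*) [Fintype ι] : Measure (ι → Bool) :=
  Measure.pi fun _ => (PMF.uniformOfFintype Bool).toMeasure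

section

variable {ι : Type*} [Fintype ι]

lemma integral_boolSign_eval (i : ι) :
    ∫ σ, boolSign (σ i) ∂rademacherMeasure ι = 0 :=
  calc ∫ σ, boolSign (σ i) ∂rademacherMeasure ι
      = ∫ b, boolSign b ∂(rademacherMeasure ι).map (Function.eval i) :=
        (integral_map (measurable_pi_apply i).aemeasurable .of_discrete).symm
    _ = ∫ b, boolSign b ∂(PMF.uniformOfFintype Bool).toMeasure := by
        rw [(measurePreserving_eval _ i).map_eq]
    _ = 0 := by simp [PMF.integral_eq_sum, boolSign]

lemma integral_boolSign_mul_boolSign [DecidableEq ι] (i j : ι) :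
    ∫ σ, boolSign (σ i) * boolSign (σ j) ∂rademacherMeasure ι = if i = j then 1 else 0 := by
  split_ifs with hij
  · simp [hij, boolSign_mul_self]
  · have hindep : iIndepFun (fun k (σ : ι → Bool) => boolSign (σ k)) (rademacherMeasure ι) :=
      iIndepFun_pi fun _ => Measurable.of_discrete.aemeasurable
    rw [← Pi.mul_def,
      (hindep.indepFun hij).integral_mul_eq_mul_integral .of_discrete .of_discrete,
      integral_boolSign_eval, zero_mul]

variable {H : Type*} [NormedAddCommGroup H] [InnerProductSpace ℝ H]

lemma norm_sq_sum_smul (a : ι → ℝ) (v : ι → H) :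
    ‖∑ i, a i • v i‖ ^ 2 = ∑ i, ∑ j, a i * a j * ⟪v i, v j⟫ := by
  rw [← real_inner_self_eq_norm_sq, sum_inner]
  simp only [inner_sum, real_inner_smul_left, real_inner_smul_right]
  exact Finset.sum_congr rfl fun i _ => Finset.sum_congr rfl fun j _ => by ring

lemma integral_norm_sq_rademacher_sum (v : ι → H) :
    ∫ σ, ‖∑ i, boolSign (σ i) • v i‖ ^ 2 ∂rademacherMeasure ι = ∑ i, ‖v i‖ ^ 2 := by
  classical
  simp only [norm_sq_sum_smul]
  rw [integral_finsetSum _ fun _ _ => .of_finite]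
  refine Finset.sum_congr rfl fun i _ => ?_
  rw [integral_finsetSum _ fun _ _ => .of_finite]
  simp only [integral_mul_const, integral_boolSign_mul_boolSign, ite_mul, one_mul, zero_mul,
    Finset.sum_ite_eq, Finset.mem_univ, if_true, real_inner_self_eq_norm_sq]

lemma integral_le_sqrt_integral_sq {Ω : Type*} [MeasurableSpace Ω] {μ : Measure Ω}
    [IsProbabilityMeasure μ] {X : Ω → ℝ} (hX : MemLp X 2 μ) :
    ∫ ω, X ω ∂μ ≤ √(∫ ω, X ω ^ 2 ∂μ) := by
  have hvar := variance_nonneg X μ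
  rw [variance_eq_sub hX, sub_nonneg] at hvar
  exact (le_abs_self _).trans (Real.abs_le_sqrt hvar)

lemma integral_norm_rademacher_sum_le (v : ι → H) :
    ∫ σ, ‖∑ i, boolSign (σ i) • v i‖ ∂rademacherMeasure ι ≤ √(∑ i, ‖v i‖ ^ 2) := by
  rw [← integral_norm_sq_rademacher_sum]
  exact integral_le_sqrt_integral_sq .of_discrete

lemma sSup_abs_mul_sum_inner_le (c : ℝ) (a : ι → ℝ) (v : ι → H) :
    sSup {r : ℝ | ∃ f : H, ‖f‖ ≤ 1 ∧ r = |c * ∑ i, a i * ⟪f, v i⟫|} ≤ |c| * ‖∑ i, a i • v i‖ := by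
  refine Real.sSup_le ?_ (by positivity)
  rintro r ⟨f, hf, rfl⟩
  have hsum : ∑ i, a i * ⟪f, v i⟫ = ⟪f, ∑ i, a i • v i⟫ := by
    simp only [inner_sum, real_inner_smul_right]
  rw [hsum, abs_mul]
  gcongr
  calc |⟪f, ∑ i, a i • v i⟫| ≤ ‖f‖ * ‖∑ i, a i • v i‖ := abs_real_inner_le_norm _ _
    _ ≤ ‖∑ i, a i • v i‖ := mul_le_of_le_one_left (norm_nonneg _) hf

lemma abs_one_div_mul_sqrt_mul (m K : ℝ) : |1 / m| * √(m * K) = √(K / m) := by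
  rw [← Real.sqrt_sq_eq_abs, ← Real.sqrt_mul (sq_nonneg _)]
  rcases eq_or_ne m 0 with rfl | hm
  · simp
  · congr 1; field_simp

end

theorem rademacher_average_rkhs_unit_ball_general
    {X : Type*} {H : Type*} [NormedAddCommGroup H] [InnerProductSpace ℝ H]
    (φ : X → H) (K : ℝ) (hK : ∀ x : X, ⟪φ x, φ x⟫ ≤ K)
    (m : ℕ) (x : Fin m → X) :
    (∫ σ : Fin m → Bool,
        sSup {r : ℝ | ∃ f : H, ‖f‖ ≤ 1 ∧
          r = |(1 / (m : ℝ)) *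
                ∑ i : Fin m, (if σ i then (1 : ℝ) else -1) * ⟪f, φ (x i)⟫|}
        ∂(Measure.pi fun _ : Fin m => (PMF.uniformOfFintype Bool).toMeasure))
      ≤ Real.sqrt (K / m) := by
  have hnorm_sq : ∑ i, ‖φ (x i)‖ ^ 2 ≤ m * K := by
    simpa [real_inner_self_eq_norm_sq] using
      Finset.sum_le_card_nsmul Finset.univ _ _ fun i _ => hK (x i)
  calc _ ≤ ∫ σ, |1 / (m : ℝ)| * ‖∑ i, boolSign (σ i) • φ (x i)‖ ∂rademacherMeasure (Fin m) :=
        integral_mono .of_finite .of_finite fun σ => sSup_abs_mul_sum_inner_le _ _ _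
    _ ≤ |1 / (m : ℝ)| * √(∑ i, ‖φ (x i)‖ ^ 2) := by
        rw [integral_const_mul]
        gcongr
        exact integral_norm_rademacher_sum_le _
    _ ≤ |1 / (m : ℝ)| * √(m * K) := by gcongr
    _ = √(K / m) := abs_one_div_mul_sqrt_mul _ _

/-- Rademacher average bound for the RKHS unit ball:
`E_σ sup_{‖f‖≤1} |(1/m) Σ σ_i f(x_i)| ≤ √(K/m)` when `k(x,x) ≤ K`. -/
theorem rademacher_average_rkhs_unit_ball
    {X : Type*} {H : Type*} [NormedAddCommGroup H] [InnerProductSpace ℝ H]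
    (φ : X → H) (K : ℝ) (hK : ∀ x : X, ⟪φ x, φ x⟫ ≤ K)
    (m : ℕ) (hm : 1 ≤ m) (x : Fin m → X) :
    (∫ σ : Fin m → Bool,
        sSup {r : ℝ | ∃ f : H, ‖f‖ ≤ 1 ∧
          r = |(1 / (m : ℝ)) *
                ∑ i : Fin m, (if σ i then (1 : ℝ) else -1) * ⟪f, φ (x i)⟫|}
        ∂(Measure.pi fun _ : Fin m => (PMF.uniformOfFintype Bool).toMeasure))
      ≤ Real.sqrt (K / m) :=
  rademacher_average_rkhs_unit_ball_general φ K hK m x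
end

section
/- (Hoeffding bound for the unbiased MMD U-statistic) Assume 0 ≤ k(x,y) ≤ K, so the U-statistic kernel h(z,z') = k(x,x') + k(y,y') − k(x,y') − k(x',y) satisfies −2K ≤ h ≤ 2K. Then for the one-sample U-statistic MMD_u²(X,Y) = (1/(m(m−1))) Σ_{i≠j} h(z_i,z_j) on i.i.d. z_i, Pr{ MMD_u² − MMD² > t } ≤ exp(−t² ⌊m/2⌋ / (8K²)), and the same bound holds for deviations below −t. -/
/-!
Hoeffding's argument. Fix `n = ⌊m/2⌋` disjoint pairs of indices `(iᵣ, jᵣ)`. Averaging over all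
permutations `σ` of the sample writes the U-statistic as the mean of the block statistics
`V σ = (1/n) ∑ r, h (z (σ iᵣ)) (z (σ jᵣ))`, each of which is a mean of `n` independent copies of
`h (z, z')`. By Hoeffding's lemma every centred `V σ` is sub-Gaussian with variance proxy
`((b - a) / 2)² / n`, and since `exp` is convex, any convex combination of such variables,
dependent or not, is sub-Gaussian with the same proxy. The Chernoff bound then gives both tails.
-/

open MeasureTheory ProbabilityTheory
open scoped NNReal

lemma Equiv.Perm.exists_apply_eq_apply_eq {α : Type*} [DecidableEq α] {a b i j : α}
    (hab : a ≠ b) (hij : i ≠ j) :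
    ∃ τ : Equiv.Perm α, τ a = i ∧ τ b = j := by
  refine ⟨Equiv.swap (Equiv.swap a i b) j * Equiv.swap a i, ?_, by simp⟩
  have : Equiv.swap a i b ≠ i := by
    simpa using (Equiv.swap a i).injective.ne hab.symm
  simp [Equiv.swap_apply_of_ne_of_ne this.symm hij]

section
variable {α M : Type*} [Fintype α] [DecidableEq α] [AddCommMonoid M]

lemma Equiv.Perm.sum_apply_apply_eq_of_ne (f : α → α → M) {a b i j : α} (hab : a ≠ b)
    (hij : i ≠ j) :
    ∑ σ : Equiv.Perm α, f (σ a) (σ b) = ∑ σ : Equiv.Perm α, f (σ i) (σ j) := by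
  obtain ⟨τ, rfl, rfl⟩ := Equiv.Perm.exists_apply_eq_apply_eq hab hij
  exact (Fintype.sum_equiv (Equiv.mulRight τ) _ _ fun σ => rfl).symm

lemma Equiv.Perm.sum_offDiag_apply (f : α → α → M) (σ : Equiv.Perm α) :
    ∑ i, ∑ j, (if i ≠ j then f (σ i) (σ j) else 0) = ∑ i, ∑ j, if i ≠ j then f i j else 0 := by
  let g : α → α → M := fun i j => if i ≠ j then f i j else 0
  calc ∑ i, ∑ j, (if i ≠ j then f (σ i) (σ j) else 0) = ∑ i, ∑ j, g (σ i) (σ j) := by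
        simp only [g, σ.injective.ne_iff]
    _ = ∑ i, ∑ j, g i j :=
        (Fintype.sum_congr _ _ fun i => Equiv.sum_comp σ (g (σ i))).trans
          (Equiv.sum_comp σ fun i => ∑ j, g i j)

lemma offDiag_average_eq_perm_average (f : α → α → ℝ) {a b : α} (hab : a ≠ b) :
    1 / ((Fintype.card α : ℝ) * ((Fintype.card α : ℝ) - 1)) *
        ∑ i, ∑ j, (if i ≠ j then f i j else 0) =
      ((Fintype.card α).factorial : ℝ)⁻¹ * ∑ σ : Equiv.Perm α, f (σ a) (σ b) := by
  set S := ∑ σ : Equiv.Perm α, f (σ a) (σ b)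
  have hcard : 2 ≤ Fintype.card α := Fintype.one_lt_card_iff_nontrivial.2 ⟨a, b, hab⟩
  have hcount : ∑ i : α, ∑ j : α, (if i ≠ j then S else 0) =
      ((Fintype.card α : ℝ) * ((Fintype.card α : ℝ) - 1)) * S := by
    simp only [ne_eq, ite_not, Finset.sum_ite, Finset.sum_const_zero, Finset.filter_ne,
      Finset.sum_const, Finset.mem_univ, Finset.card_erase_of_mem, Finset.card_univ, nsmul_eq_mul,
      Nat.cast_sub (one_le_two.trans hcard), Nat.cast_one, zero_add]
    ring
  have hperm : ((Fintype.card α).factorial : ℝ) * ∑ i, ∑ j, (if i ≠ j then f i j else 0) =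
      ((Fintype.card α : ℝ) * ((Fintype.card α : ℝ) - 1)) * S := by
    calc ((Fintype.card α).factorial : ℝ) * ∑ i, ∑ j, (if i ≠ j then f i j else 0)
        = ∑ σ : Equiv.Perm α, ∑ i, ∑ j, (if i ≠ j then f (σ i) (σ j) else 0) := by
          rw [Fintype.sum_congr _ _ (Equiv.Perm.sum_offDiag_apply f), Finset.sum_const,
            Finset.card_univ, Fintype.card_perm, nsmul_eq_mul]
      _ = ∑ i : α, ∑ j : α, if i ≠ j then ∑ σ : Equiv.Perm α, f (σ i) (σ j) else 0 := by
          rw [Finset.sum_comm]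
          simp_rw [Finset.sum_comm (s := (Finset.univ : Finset (Equiv.Perm α))),
            Finset.sum_ite_irrel, Finset.sum_const_zero]
      _ = ∑ i : α, ∑ j : α, (if i ≠ j then S else 0) := by
          refine Fintype.sum_congr _ _ fun i => Fintype.sum_congr _ _ fun j => ?_
          split_ifs with hij
          · exact (Equiv.Perm.sum_apply_apply_eq_of_ne f hab hij).symm
          · rfl
      _ = _ := hcount
  have hcard_real : (2 : ℝ) ≤ Fintype.card α := by exact_mod_cast hcard
  have hfac : ((Fintype.card α).factorial : ℝ) ≠ 0 := by positivity
  have h1 : (Fintype.card α : ℝ) - 1 ≠ 0 := by linarith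
  have h2 : (Fintype.card α : ℝ) ≠ 0 := by linarith
  field_simp
  linear_combination hperm

end

lemma measurePreserving_pi_comp_of_injective {ι κ α : Type*} [Fintype ι] [Fintype κ]
    [MeasurableSpace α] (μ : Measure α) [IsProbabilityMeasure μ] {e : ι → κ}
    (he : Function.Injective e) :
    MeasurePreserving (fun z : κ → α => z ∘ e) (Measure.pi fun _ => μ)
      (Measure.pi fun _ => μ) := by
  have hind : iIndepFun (fun i (z : κ → α) => z (e i)) (Measure.pi fun _ => μ) :=
    (iIndepFun_pi (X := fun _ : κ => id) fun _ => aemeasurable_id).precomp he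
  refine ⟨by fun_prop, ?_⟩
  change Measure.map (fun (z : κ → α) i => z (e i)) _ = _
  rw [hind.map_fun_eq_pi_map fun i => (measurable_pi_apply _).aemeasurable]
  simp_rw [(measurePreserving_eval _ _).map_eq]

lemma measurePreserving_pi_pair_of_injective {ι κ α : Type*} [Fintype ι] [Fintype κ]
    [MeasurableSpace α] (μ : Measure α) [IsProbabilityMeasure μ] {e : ι ⊕ ι → κ}
    (he : Function.Injective e) :
    MeasurePreserving (fun (z : κ → α) i => (z (e (.inl i)), z (e (.inr i))))
      (Measure.pi fun _ => μ) (Measure.pi fun _ => μ.prod μ) :=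
  ((measurePreserving_arrowProdEquivProdArrow α α ι (fun _ => μ) (fun _ => μ)).symm _).comp
    ((measurePreserving_sumPiEquivProdPi fun _ => μ).comp
      (measurePreserving_pi_comp_of_injective μ he))

namespace ProbabilityTheory.HasSubgaussianMGF

variable {Ω : Type*} [MeasurableSpace Ω] {μ : Measure Ω} {c : ℝ≥0}

lemma sum_mul_of_sum_eq_one {ι : Type*} [Fintype ι] {X : ι → Ω → ℝ} {w : ι → ℝ}
    (h : ∀ i, HasSubgaussianMGF (X i) c μ) (hw₀ : ∀ i, 0 ≤ w i) (hw₁ : ∑ i, w i = 1) :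
    HasSubgaussianMGF (fun ω => ∑ i, w i * X i ω) c μ := by
  have hexp_le : ∀ t ω, Real.exp (t * ∑ i, w i * X i ω) ≤ ∑ i, w i * Real.exp (t * X i ω) := by
    intro t ω
    have := convexOn_exp.map_sum_le (t := Finset.univ) (w := w) (p := fun i => t * X i ω)
      (fun i _ => hw₀ i) hw₁ (fun i _ => Set.mem_univ _)
    simpa only [smul_eq_mul, Finset.mul_sum, mul_left_comm t] using this
  have hint_sum : ∀ t, Integrable (fun ω => ∑ i, w i * Real.exp (t * X i ω)) μ := fun t =>
    integrable_finsetSum _ fun i _ => ((h i).integrable_exp_mul t).const_mul (w i)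
  have hint : ∀ t, Integrable (fun ω => Real.exp (t * ∑ i, w i * X i ω)) μ := by
    intro t
    have hmeas : ∀ i, AEMeasurable (X i) μ := fun i => (h i).aemeasurable
    refine (hint_sum t).mono' (by fun_prop) (ae_of_all _ fun ω => ?_)
    rw [Real.norm_of_nonneg (Real.exp_pos _).le]
    simpa using hexp_le t ω
  refine ⟨hint, fun t => ?_⟩
  calc mgf (fun ω => ∑ i, w i * X i ω) μ t
      ≤ ∑ i, w i * mgf (X i) μ t := by
        simp only [mgf, ← integral_const_mul]
        rw [← integral_finsetSum _ fun i _ => ((h i).integrable_exp_mul t).const_mul (w i)]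
        exact integral_mono (hint t) (hint_sum t) (hexp_le t)
    _ ≤ ∑ i, w i * Real.exp (c * t ^ 2 / 2) := by
        gcongr with i
        exacts [hw₀ i, (h i).mgf_le t]
    _ = Real.exp (c * t ^ 2 / 2) := by rw [← Finset.sum_mul, hw₁, one_mul]

lemma measure_lt_le [IsFiniteMeasure μ] {X : Ω → ℝ} (h : HasSubgaussianMGF X c μ) {ε : ℝ}
    (hε : 0 ≤ ε) : μ {ω | ε < X ω} ≤ ENNReal.ofReal (Real.exp (-ε ^ 2 / (2 * c))) :=
  calc μ {ω | ε < X ω} ≤ μ {ω | ε ≤ X ω} := measure_mono fun _ (hω : ε < _) => hω.le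
    _ = ENNReal.ofReal (μ.real {ω | ε ≤ X ω}) := (ofReal_measureReal (measure_ne_top _ _)).symm
    _ ≤ _ := ENNReal.ofReal_le_ofReal (h.measure_ge_le hε)

end ProbabilityTheory.HasSubgaussianMGF

lemma hasSubgaussianMGF_pi_mean_sub_integral {Ω ι : Type*} [MeasurableSpace Ω] [Fintype ι]
    [Nonempty ι] (ρ : Measure Ω) [IsProbabilityMeasure ρ] {f : Ω → ℝ} (hf : Measurable f)
    {a b : ℝ} (hab : ∀ᵐ x ∂ρ, f x ∈ Set.Icc a b) :
    HasSubgaussianMGF (fun w : ι → Ω => (Fintype.card ι : ℝ)⁻¹ * ∑ i, (f (w i) - ρ[f]))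
      ((‖b - a‖₊ / 2) ^ 2 / Fintype.card ι) (Measure.pi fun _ => ρ) := by
  have hind := iIndepFun_pi (Ω := fun _ : ι => Ω) (μ := fun _ => ρ) (X := fun _ x => f x - ρ[f])
    fun _ => (hf.sub_const _).aemeasurable
  have hcoord : ∀ i, HasSubgaussianMGF (fun w : ι → Ω => f (w i) - ρ[f])
      ((‖b - a‖₊ / 2) ^ 2) (Measure.pi fun _ => ρ) := fun i =>
    HasSubgaussianMGF.of_map (X := fun x => f x - ρ[f]) (measurable_pi_apply i).aemeasurable
      (by rw [(measurePreserving_eval _ i).map_eq]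
          exact hasSubgaussianMGF_of_mem_Icc hf.aemeasurable hab)
  have hsum := HasSubgaussianMGF.sum_of_iIndepFun hind (s := Finset.univ) fun i _ => hcoord i
  convert hsum.const_mul (Fintype.card ι : ℝ)⁻¹ using 1
  ext
  change _ = (Fintype.card ι : ℝ)⁻¹ ^ 2 * ((∑ _ : ι, (‖b - a‖₊ / 2) ^ 2 : ℝ≥0) : ℝ)
  push_cast
  simp only [Finset.sum_const, Finset.card_univ, nsmul_eq_mul]
  field_simp

noncomputable def uStatistic {Z : Type*} {m : ℕ} (h : Z → Z → ℝ) (z : Fin m → Z) : ℝ :=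
  1 / ((m : ℝ) * ((m : ℝ) - 1)) * ∑ i, ∑ j, if i ≠ j then h (z i) (z j) else 0

lemma uStatistic_eq_perm_average {Z ι : Type*} [Fintype ι] [Nonempty ι] {m : ℕ}
    (h : Z → Z → ℝ) (z : Fin m → Z) {e : ι ⊕ ι → Fin m} (he : Function.Injective e) :
    uStatistic h z = ∑ σ : Equiv.Perm (Fin m), (m.factorial : ℝ)⁻¹ *
      ((Fintype.card ι : ℝ)⁻¹ * ∑ r, h (z (σ (e (.inl r)))) (z (σ (e (.inr r))))) := by
  have hpair : ∀ r, uStatistic h z =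
      (m.factorial : ℝ)⁻¹ *
        ∑ σ : Equiv.Perm (Fin m), h (z (σ (e (.inl r)))) (z (σ (e (.inr r)))) := by
    intro r
    have := offDiag_average_eq_perm_average (fun i j => h (z i) (z j))
      (he.ne (Sum.inl_ne_inr (a := r) (b := r)))
    rwa [Fintype.card_fin] at this
  calc uStatistic h z = (Fintype.card ι : ℝ)⁻¹ * ∑ r : ι, uStatistic h z := by
        rw [Finset.sum_const, Finset.card_univ, nsmul_eq_mul, inv_mul_cancel_left₀ (by positivity)]
    _ = _ := by
        rw [Finset.sum_congr rfl fun r _ => hpair r]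
        simp only [Finset.mul_sum]
        rw [Finset.sum_comm]
        exact Finset.sum_congr rfl fun σ _ => Finset.sum_congr rfl fun r _ => by ring

theorem hasSubgaussianMGF_uStatistic_sub {Z : Type*} [MeasurableSpace Z] (μ : Measure Z)
    [IsProbabilityMeasure μ] {h : Z → Z → ℝ} (hh : Measurable (Function.uncurry h)) {a b : ℝ}
    (hab : ∀ᵐ w ∂μ.prod μ, Function.uncurry h w ∈ Set.Icc a b) {m : ℕ} (hm : 2 ≤ m) :
    HasSubgaussianMGF (fun z : Fin m → Z => uStatistic h z - ∫ w, Function.uncurry h w ∂μ.prod μ)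
      ((‖b - a‖₊ / 2) ^ 2 / (m / 2 : ℕ)) (Measure.pi fun _ => μ) := by
  set n := m / 2
  set θ := ∫ w, Function.uncurry h w ∂μ.prod μ
  have hn : 0 < n := by omega
  have : Nonempty (Fin n) := ⟨⟨0, hn⟩⟩
  -- the disjoint pairs `(e (.inl r), e (.inr r)) = (r, n + r)`
  let e : Fin n ⊕ Fin n → Fin m := Fin.castLE (by omega) ∘ finSumFinEquiv
  have he : Function.Injective e := (Fin.castLE_injective _).comp finSumFinEquiv.injective
  have hblock : ∀ σ : Equiv.Perm (Fin m), HasSubgaussianMGF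
      (fun z : Fin m → Z => (n : ℝ)⁻¹ * ∑ r, (h (z (σ (e (.inl r)))) (z (σ (e (.inr r)))) - θ))
      ((‖b - a‖₊ / 2) ^ 2 / n) (Measure.pi fun _ => μ) := by
    intro σ
    have hpairs := measurePreserving_pi_pair_of_injective μ (σ.injective.comp he)
    have hmean := hasSubgaussianMGF_pi_mean_sub_integral (ι := Fin n) (μ.prod μ) hh hab
    rw [Fintype.card_fin, ← hpairs.map_eq] at hmean
    exact (hmean.of_map hpairs.measurable.aemeasurable :)
  convert HasSubgaussianMGF.sum_mul_of_sum_eq_one hblock (w := fun _ => (m.factorial : ℝ)⁻¹)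
    (fun _ => by positivity) (by simp [Fintype.card_perm, Nat.factorial_ne_zero]) using 2 with z
  rw [uStatistic_eq_perm_average h z he]
  have hfac : (m.factorial : ℝ) ≠ 0 := by positivity
  have hn' : (n : ℝ) ≠ 0 := by positivity
  simp only [Fintype.card_fin, Finset.sum_sub_distrib, mul_sub, Finset.sum_const, Finset.card_univ,
    Fintype.card_perm, nsmul_eq_mul]
  field_simp

theorem mmd_u_sq_hoeffding_general
    {X : Type*} [MeasurableSpace X] (k : X → X → ℝ)
    (hk : Measurable fun w : X × X => k w.1 w.2)
    (K : ℝ) (hk0 : ∀ x y, 0 ≤ k x y) (hkK : ∀ x y, k x y ≤ K)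
    (μ : Measure (X × X)) [IsProbabilityMeasure μ]
    (m : ℕ) (hm : 2 ≤ m) (t : ℝ) (ht : 0 < t) :
    ((Measure.pi fun _ : Fin m => μ)
        {z | ((∫ w : (X × X) × (X × X),
                (k w.1.1 w.2.1 + k w.1.2 w.2.2 - k w.1.1 w.2.2 - k w.2.1 w.1.2)
              ∂μ.prod μ) + t) <
            ((1 / ((m : ℝ) * ((m : ℝ) - 1))) *
              ∑ i : Fin m, ∑ j : Fin m,
                if i ≠ j then
                  k (z i).1 (z j).1 + k (z i).2 (z j).2
                    - k (z i).1 (z j).2 - k (z j).1 (z i).2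
                else 0)}
        ≤ ENNReal.ofReal (Real.exp (-(t ^ 2) * ((m / 2 : ℕ) : ℝ) / (8 * K ^ 2))))
    ∧ ((Measure.pi fun _ : Fin m => μ)
        {z | ((1 / ((m : ℝ) * ((m : ℝ) - 1))) *
              ∑ i : Fin m, ∑ j : Fin m,
                (if i ≠ j then
                  k (z i).1 (z j).1 + k (z i).2 (z j).2
                    - k (z i).1 (z j).2 - k (z j).1 (z i).2
                else 0)) <
            ((∫ w : (X × X) × (X × X),
                (k w.1.1 w.2.1 + k w.1.2 w.2.2 - k w.1.1 w.2.2 - k w.2.1 w.1.2)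
              ∂μ.prod μ) - t)}
        ≤ ENNReal.ofReal (Real.exp (-(t ^ 2) * ((m / 2 : ℕ) : ℝ) / (8 * K ^ 2)))) := by
  let h : X × X → X × X → ℝ := fun z z' => k z.1 z'.1 + k z.2 z'.2 - k z.1 z'.2 - k z'.1 z.2
  have hh : Measurable (Function.uncurry h) := by
    simp only [h, Function.uncurry_def]
    fun_prop
  have hbound : ∀ w, Function.uncurry h w ∈ Set.Icc (-(2 * K)) (2 * K) := fun w => by
    simp only [Function.uncurry_def, h, Set.mem_Icc]
    constructor <;> linarith [hk0 w.1.1 w.2.1, hk0 w.1.2 w.2.2, hk0 w.1.1 w.2.2, hk0 w.2.1 w.1.2,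
      hkK w.1.1 w.2.1, hkK w.1.2 w.2.2, hkK w.1.1 w.2.2, hkK w.2.1 w.1.2]
  have hS := hasSubgaussianMGF_uStatistic_sub μ hh (ae_of_all _ hbound) hm
  have hexp : -t ^ 2 / (2 * ((‖2 * K - -(2 * K)‖₊ / 2) ^ 2 / ((m / 2 : ℕ) : ℝ≥0) : ℝ≥0)) =
      -(t ^ 2) * ((m / 2 : ℕ) : ℝ) / (8 * K ^ 2) := by
    push_cast
    rw [Real.norm_eq_abs, div_pow, sq_abs, mul_div_assoc', div_div_eq_mul_div]
    ring
  rw [← hexp]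
  constructor
  · refine (measure_mono ?_).trans (hS.measure_lt_le ht.le)
    intro z (hz : (_ : ℝ) < _)
    exact lt_sub_iff_add_lt'.2 hz
  · refine (measure_mono ?_).trans (hS.neg.measure_lt_le ht.le)
    intro z (hz : (_ : ℝ) < _)
    show t < -(uStatistic h z - _)
    rw [neg_sub]
    exact lt_sub_comm.1 hz

/-- Hoeffding bound for the unbiased MMD U-statistic: with kernel values
in `[0, K]` (so the U-statistic kernel `h` takes values in `[-2K, 2K]`), the deviations
of `MMD_u²` from its mean `MMD² = E h(z,z')` satisfy a two-sided exponential bound with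
effective sample size `⌊m/2⌋`. -/
theorem mmd_u_sq_hoeffding
    {X : Type*} [MeasurableSpace X] (k : X → X → ℝ)
    (hk : Measurable fun w : X × X => k w.1 w.2)
    (K : ℝ) (hK : 0 < K) (hk0 : ∀ x y, 0 ≤ k x y) (hkK : ∀ x y, k x y ≤ K)
    (μ : Measure (X × X)) [IsProbabilityMeasure μ]
    (m : ℕ) (hm : 2 ≤ m) (t : ℝ) (ht : 0 < t) :
    ((Measure.pi fun _ : Fin m => μ)
        {z | ((∫ w : (X × X) × (X × X),
                (k w.1.1 w.2.1 + k w.1.2 w.2.2 - k w.1.1 w.2.2 - k w.2.1 w.1.2)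
              ∂μ.prod μ) + t) <
            ((1 / ((m : ℝ) * ((m : ℝ) - 1))) *
              ∑ i : Fin m, ∑ j : Fin m,
                if i ≠ j then
                  k (z i).1 (z j).1 + k (z i).2 (z j).2
                    - k (z i).1 (z j).2 - k (z j).1 (z i).2
                else 0)}
        ≤ ENNReal.ofReal (Real.exp (-(t ^ 2) * ((m / 2 : ℕ) : ℝ) / (8 * K ^ 2))))
    ∧ ((Measure.pi fun _ : Fin m => μ)
        {z | ((1 / ((m : ℝ) * ((m : ℝ) - 1))) *
              ∑ i : Fin m, ∑ j : Fin m,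
                (if i ≠ j then
                  k (z i).1 (z j).1 + k (z i).2 (z j).2
                    - k (z i).1 (z j).2 - k (z j).1 (z i).2
                else 0)) <
            ((∫ w : (X × X) × (X × X),
                (k w.1.1 w.2.1 + k w.1.2 w.2.2 - k w.1.1 w.2.2 - k w.2.1 w.1.2)
              ∂μ.prod μ) - t)}
        ≤ ENNReal.ofReal (Real.exp (-(t ^ 2) * ((m / 2 : ℕ) : ℝ) / (8 * K ^ 2)))) :=
  mmd_u_sq_hoeffding_general k hk K hk0 hkK μ m hm t ht
end

section
/- (Third moment of the degenerate U-statistic, leading term) Under the same degeneracy assumptions and E|h|³ < ∞, E[(MMD_u²)³] = (8(n−2)/(n²(n−1)²)) E_{z,z'}[ h(z,z') E_{z''}( h(z,z'') h(z',z'') ) ] + (2/(n(n−1)))² E_{z,z'}[h³(z,z')]. -/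
/-!
Write `S_s = ∑_{i < j in s} h(z_i, z_j)` and add the indices one at a time, largest last.
Adding `v` adds `T = ∑_{i ∈ s} h(z_i, z_v)`, and in
`E[(S + T)³] = E[S³] + 3 E[S²T] + 3 E[ST²] + E[T³]` a product of three kernel terms vanishes as
soon as some index occurs in only one factor: integrate that coordinate out first and use
`E_{z'} h(z, z') = 0`. Every term of `E[S²T]` has `v` alone, in `E[ST²]` only the two orderings
of each pair `{i, j} ⊆ s` survive (the triangle `i, j, v`), and in `E[T³]` only the cubes
`h(z_i, z_v)³`. Hence `E[S_{s ∪ {v}}³] = E[S_s³] + 3 |s| (|s| - 1) E[triangle] + |s| E[h³]`,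
which sums to `C(n, 2) E[h³] + n (n - 1) (n - 2) E[triangle]`. Finiteness of `E|h|³` makes every
triple product integrable.
-/

open MeasureTheory ProbabilityTheory Finset Function

section ProductMeasure

variable {ι : Type*} [Fintype ι] {X : ι → Type*} [∀ i, MeasurableSpace (X i)]
  (μ : ∀ i, Measure (X i)) [∀ i, IsProbabilityMeasure (μ i)]

theorem measurePreserving_eval_prod {a b : ι} (hab : a ≠ b) :
    MeasurePreserving (fun z : ∀ i, X i => (z a, z b)) (Measure.pi μ) ((μ a).prod (μ b)) := by
  have hind : IndepFun (fun z : ∀ i, X i => z a) (fun z => z b) (Measure.pi μ) :=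
    (iIndepFun_pi (X := fun i => (id : X i → X i)) fun _ => aemeasurable_id).indepFun hab
  refine ⟨by fun_prop, ?_⟩
  rw [(indepFun_iff_map_prod_eq_prod_map_map
    (measurable_pi_apply a).aemeasurable (measurable_pi_apply b).aemeasurable).1 hind]
  exact congr_arg₂ _ (measurePreserving_eval μ a).map_eq (measurePreserving_eval μ b).map_eq

theorem measurePreserving_update [DecidableEq ι] (v : ι) :
    MeasurePreserving (fun p : (∀ i, X i) × X v => update p.1 v p.2)
      ((Measure.pi μ).prod (μ v)) (Measure.pi μ) := by
  refine ⟨by fun_prop, (Measure.pi_eq fun s hs => ?_).symm⟩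
  have hpre : (fun p : (∀ i, X i) × X v => update p.1 v p.2) ⁻¹' Set.univ.pi s
      = Set.univ.pi (update s v Set.univ) ×ˢ s v := by
    ext ⟨z, u⟩
    simp only [Set.mem_preimage, Set.mem_pi, Set.mem_univ, true_implies, Set.mem_prod]
    constructor
    · intro H
      refine ⟨fun i => ?_, by simpa using H v⟩
      rcases eq_or_ne i v with rfl | hi
      · simp
      · simpa [hi] using H i
    · rintro ⟨H, hu⟩ i
      rcases eq_or_ne i v with rfl | hi
      · simpa using hu
      · simpa [hi] using H i
  rw [Measure.map_apply (by fun_prop) (MeasurableSet.univ_pi hs), hpre, Measure.prod_prod,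
    Measure.pi_pi, ← Finset.mul_prod_erase _ _ (Finset.mem_univ v),
    ← Finset.mul_prod_erase _ _ (Finset.mem_univ v)]
  simp only [update_self, measure_univ, one_mul]
  rw [mul_comm]
  congr 1
  refine Finset.prod_congr rfl fun i hi => ?_
  rw [update_of_ne (Finset.ne_of_mem_erase hi)]

theorem integral_eq_integral_integral_update [DecidableEq ι] (v : ι) {E : Type*}
    [NormedAddCommGroup E] [NormedSpace ℝ E] {F : (∀ i, X i) → E}
    (hF : Integrable F (Measure.pi μ)) :
    ∫ z, F z ∂Measure.pi μ = ∫ z, ∫ u, F (update z v u) ∂μ v ∂Measure.pi μ := by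
  have hmp := measurePreserving_update μ v
  calc ∫ z, F z ∂Measure.pi μ
      = ∫ p, F (update p.1 v p.2) ∂(Measure.pi μ).prod (μ v) := by
        rw [← integral_map hmp.measurable.aemeasurable
          (by rw [hmp.map_eq]; exact hF.aestronglyMeasurable), hmp.map_eq]
    _ = ∫ z, ∫ u, F (update z v u) ∂μ v ∂Measure.pi μ :=
        integral_prod _ (hmp.integrable_comp_of_integrable hF)

theorem integral_comp_eval_prod {E : Type*} [NormedAddCommGroup E] [NormedSpace ℝ E]
    {a b : ι} (hab : a ≠ b) {g : X a × X b → E} (hg : AEStronglyMeasurable g ((μ a).prod (μ b))) :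
    ∫ z, g (z a, z b) ∂Measure.pi μ = ∫ w, g w ∂(μ a).prod (μ b) := by
  have hmp := measurePreserving_eval_prod μ hab
  rw [← hmp.map_eq, integral_map hmp.measurable.aemeasurable (by rwa [hmp.map_eq])]

end ProductMeasure

theorem abs_mul_mul_le_pow_three_add (x y w : ℝ) : |x * y * w| ≤ |x| ^ 3 + |y| ^ 3 + |w| ^ 3 := by
  have hx := abs_nonneg x
  have hy := abs_nonneg y
  have hw := abs_nonneg w
  rw [abs_mul, abs_mul]
  nlinarith [mul_nonneg hx hy, mul_nonneg hy hw, mul_nonneg hx hw, mul_nonneg (mul_nonneg hx hy) hw,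
    sq_nonneg (|x| - |y|), sq_nonneg (|y| - |w|), sq_nonneg (|x| - |w|)]

section LThree

variable {α : Type*} [MeasurableSpace α] {μ : Measure α} {f g k : α → ℝ}

theorem MeasureTheory.MemLp.integrable_mul_mul (hf : MemLp f 3 μ) (hg : MemLp g 3 μ)
    (hk : MemLp k 3 μ) :
    Integrable (fun x => f x * g x * k x) μ := by
  have hcubes : Integrable (fun x => ‖f x‖ ^ 3 + ‖g x‖ ^ 3 + ‖k x‖ ^ 3) μ :=
    ((hf.integrable_norm_pow three_ne_zero).add (hg.integrable_norm_pow three_ne_zero)).add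
      (hk.integrable_norm_pow three_ne_zero)
  refine hcubes.mono' ((hf.1.mul hg.1).mul hk.1) (ae_of_all _ fun x => ?_)
  simpa only [Real.norm_eq_abs] using abs_mul_mul_le_pow_three_add (f x) (g x) (k x)

theorem integral_add_pow_three (hf : MemLp f 3 μ) (hg : MemLp g 3 μ) :
    ∫ x, (f x + g x) ^ 3 ∂μ
      = ∫ x, f x ^ 3 ∂μ + 3 * ∫ x, f x ^ 2 * g x ∂μ + 3 * ∫ x, f x * g x ^ 2 ∂μ
        + ∫ x, g x ^ 3 ∂μ := by
  have hfff : Integrable (fun x => f x ^ 3) μ :=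
    (hf.integrable_mul_mul hf hf).congr (ae_of_all _ fun x => by ring)
  have hffg : Integrable (fun x => f x ^ 2 * g x) μ :=
    (hf.integrable_mul_mul hf hg).congr (ae_of_all _ fun x => by ring)
  have hfgg : Integrable (fun x => f x * g x ^ 2) μ :=
    (hf.integrable_mul_mul hg hg).congr (ae_of_all _ fun x => by ring)
  have hggg : Integrable (fun x => g x ^ 3) μ :=
    (hg.integrable_mul_mul hg hg).congr (ae_of_all _ fun x => by ring)
  calc ∫ x, (f x + g x) ^ 3 ∂μ
      = ∫ x, f x ^ 3 + 3 * (f x ^ 2 * g x) + 3 * (f x * g x ^ 2) + g x ^ 3 ∂μ := by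
        congr 1 with x
        ring
    _ = _ := by
        rw [integral_add, integral_add, integral_add, integral_const_mul, integral_const_mul]
        exacts [hfff, hffg.const_mul 3, hfff.add (hffg.const_mul 3), hfgg.const_mul 3,
          (hfff.add (hffg.const_mul 3)).add (hfgg.const_mul 3), hggg]

end LThree

section LtSum

variable {ι : Type*} [LinearOrder ι]

def ltSum {M : Type*} [AddCommMonoid M] (s : Finset ι) (g : ι → ι → M) : M :=
  ∑ i ∈ s, ∑ j ∈ s, if i < j then g i j else 0

theorem ltSum_insert_of_forall_lt {M : Type*} [AddCommMonoid M] {s : Finset ι} {v : ι}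
    (hv : ∀ i ∈ s, i < v) (g : ι → ι → M) :
    ltSum (insert v s) g = ltSum s g + ∑ i ∈ s, g i v := by
  have hvs : v ∉ s := fun h => lt_irrefl v (hv v h)
  have hfrom : ∑ j ∈ insert v s, (if v < j then g v j else 0) = 0 :=
    sum_eq_zero fun j hj => if_neg (by
      rcases mem_insert.1 hj with rfl | hj
      exacts [lt_irrefl j, (hv j hj).not_gt])
  rw [ltSum, sum_insert hvs, hfrom, zero_add, ltSum, ← sum_add_distrib]
  refine sum_congr rfl fun i hi => ?_
  rw [sum_insert hvs, if_pos (hv i hi), add_comm]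

theorem ltSum_congr {M : Type*} [AddCommMonoid M] {s : Finset ι} {g g' : ι → ι → M}
    (hg : ∀ i ∈ s, ∀ j ∈ s, i < j → g i j = g' i j) : ltSum s g = ltSum s g' :=
  sum_congr rfl fun i hi => sum_congr rfl fun j hj => by
    split_ifs with hij
    exacts [hg i hi j hj hij, rfl]

theorem ltSum_const (s : Finset ι) (c : ℝ) :
    ltSum s (fun _ _ => c) = #s * (#s - 1) / 2 * c := by
  induction s using Finset.induction_on_max with
  | empty => simp [ltSum]
  | insert v s hv ih =>
    rw [ltSum_insert_of_forall_lt hv, ih, sum_const, card_insert_of_notMem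
      fun h => lt_irrefl v (hv v h), nsmul_eq_mul]
    push_cast
    ring

theorem ltSum_mul {R : Type*} [NonUnitalNonAssocSemiring R] (s : Finset ι) (g : ι → ι → R)
    (c : R) : ltSum s g * c = ltSum s fun i j => g i j * c := by
  simp only [ltSum, sum_mul, ite_mul, zero_mul]

variable {α : Type*} [MeasurableSpace α] {μ : Measure α} {s : Finset ι} {F : ι → ι → α → ℝ}

theorem integral_ltSum (hF : ∀ i ∈ s, ∀ j ∈ s, i < j → Integrable (F i j) μ) :
    ∫ x, ltSum s (fun i j => F i j x) ∂μ = ltSum s fun i j => ∫ x, F i j x ∂μ := by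
  have hite : ∀ i ∈ s, ∀ j ∈ s, Integrable (fun x => if i < j then F i j x else 0) μ := by
    intro i hi j hj
    split_ifs with hij
    exacts [hF i hi j hj hij, integrable_zero _ _ _]
  unfold ltSum
  rw [integral_finsetSum _ fun i hi => integrable_finsetSum _ (hite i hi)]
  refine sum_congr rfl fun i hi => ?_
  rw [integral_finsetSum _ (hite i hi)]
  refine sum_congr rfl fun j _ => ?_
  split_ifs <;> simp

theorem memLp_ltSum {p : ENNReal} (hF : ∀ i ∈ s, ∀ j ∈ s, i < j → MemLp (F i j) p μ) :
    MemLp (fun x => ltSum s fun i j => F i j x) p μ := by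
  refine memLp_finsetSum _ fun i hi => memLp_finsetSum _ fun j hj => ?_
  split_ifs with hij
  exacts [hF i hi j hj hij, MemLp.zero (ε := ℝ)]

end LtSum

section DegenerateKernel

variable {Z : Type*} [MeasurableSpace Z] {μ : Measure Z} [IsProbabilityMeasure μ]
  {h : Z → Z → ℝ} {ι : Type*} [Fintype ι]

theorem memLp_comp_eval_prod (hh : MemLp (fun w : Z × Z => h w.1 w.2) 3 (μ.prod μ)) {a b : ι}
    (hab : a ≠ b) : MemLp (fun z : ι → Z => h (z a) (z b)) 3 (Measure.pi fun _ => μ) :=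
  hh.comp_measurePreserving (measurePreserving_eval_prod (fun _ => μ) hab :)

theorem memLp_sum_comp_eval_prod (hh : MemLp (fun w : Z × Z => h w.1 w.2) 3 (μ.prod μ))
    {s : Finset ι} {v : ι} (hvs : v ∉ s) :
    MemLp (fun z : ι → Z => ∑ i ∈ s, h (z i) (z v)) 3 (Measure.pi fun _ => μ) :=
  memLp_finsetSum _ fun _ hi => memLp_comp_eval_prod hh (ne_of_mem_of_not_mem hi hvs)

theorem integral_mul_eq_zero_of_degenerate [DecidableEq ι] (hdeg : ∀ᵐ x ∂μ, ∫ y, h x y ∂μ = 0)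
    {f : (ι → Z) → ℝ} {w v : ι} (hwv : w ≠ v) (hf : ∀ z u, f (update z v u) = f z)
    (hint : Integrable (fun z => f z * h (z w) (z v)) (Measure.pi fun _ => μ)) :
    ∫ z, f z * h (z w) (z v) ∂(Measure.pi fun _ => μ) = 0 := by
  rw [integral_eq_integral_integral_update _ v hint]
  have hdeg' : ∀ᵐ z ∂(Measure.pi fun _ : ι => μ), ∫ u, h (z w) u ∂μ = 0 :=
    (Measure.quasiMeasurePreserving_eval (fun _ : ι => μ) w).ae
      (p := fun x => ∫ u, h x u ∂μ = 0) hdeg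
  refine integral_eq_zero_of_ae ?_
  filter_upwards [hdeg'] with z hz
  simp only [hf, update_self, update_of_ne hwv, integral_const_mul, hz, mul_zero, Pi.zero_apply]

theorem integral_edge_mul_edge_mul_edge_eq_zero
    (hh : MemLp (fun w : Z × Z => h w.1 w.2) 3 (μ.prod μ)) (hdeg : ∀ᵐ x ∂μ, ∫ y, h x y ∂μ = 0)
    {a b c d w v : ι} (hab : a ≠ b) (hcd : c ≠ d) (hwv : w ≠ v)
    (hav : a ≠ v) (hbv : b ≠ v) (hcv : c ≠ v) (hdv : d ≠ v) :
    ∫ z : ι → Z, h (z a) (z b) * h (z c) (z d) * h (z w) (z v) ∂(Measure.pi fun _ => μ) = 0 := by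
  classical
  exact integral_mul_eq_zero_of_degenerate hdeg hwv
    (fun z u => by simp only [update_of_ne, hav, hbv, hcv, hdv, ne_eq, not_false_eq_true])
    ((memLp_comp_eval_prod hh hab).integrable_mul_mul (memLp_comp_eval_prod hh hcd)
      (memLp_comp_eval_prod hh hwv))

theorem integral_triangle (hmeas : Measurable fun w : Z × Z => h w.1 w.2)
    (hh : MemLp (fun w : Z × Z => h w.1 w.2) 3 (μ.prod μ)) {a b c : ι}
    (hab : a ≠ b) (hac : a ≠ c) (hbc : b ≠ c) :
    ∫ z : ι → Z, h (z a) (z b) * h (z a) (z c) * h (z b) (z c) ∂(Measure.pi fun _ => μ)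
      = ∫ w, h w.1 w.2 * ∫ u, h w.1 u * h w.2 u ∂μ ∂μ.prod μ := by
  classical
  have hmeas' : Measurable fun p : (Z × Z) × Z => h p.1.1 p.2 * h p.1.2 p.2 :=
    (hmeas.comp (f := fun p : (Z × Z) × Z => (p.1.1, p.2)) (by fun_prop)).mul
      (hmeas.comp (f := fun p : (Z × Z) × Z => (p.1.2, p.2)) (by fun_prop))
  rw [integral_eq_integral_integral_update _ c ((memLp_comp_eval_prod hh hab).integrable_mul_mul
    (memLp_comp_eval_prod hh hac) (memLp_comp_eval_prod hh hbc))]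
  simp only [update_self, update_of_ne hac, update_of_ne hbc, mul_assoc,
    integral_const_mul]
  exact integral_comp_eval_prod (fun _ => μ) hab
    (g := fun w => h w.1 w.2 * ∫ u, h w.1 u * h w.2 u ∂μ)
    (hmeas.mul hmeas'.stronglyMeasurable.integral_prod_right'.measurable).aestronglyMeasurable

theorem integral_star_mul_star_mul_star [DecidableEq ι]
    (hmeas : Measurable fun w : Z × Z => h w.1 w.2)
    (hsymm : ∀ x y, h x y = h y x) (hh : MemLp (fun w : Z × Z => h w.1 w.2) 3 (μ.prod μ))
    (hdeg : ∀ᵐ x ∂μ, ∫ y, h x y ∂μ = 0) {i j k v : ι} (hiv : i ≠ v) (hjv : j ≠ v) (hkv : k ≠ v) :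
    ∫ z : ι → Z, h (z i) (z v) * h (z j) (z v) * h (z k) (z v) ∂(Measure.pi fun _ => μ)
      = if i = j ∧ j = k then ∫ w, h w.1 w.2 ^ 3 ∂μ.prod μ else 0 := by
  split_ifs with hijk
  · obtain ⟨rfl, rfl⟩ := hijk
    simp only [← pow_three']
    exact integral_comp_eval_prod (fun _ => μ) hiv (g := fun w => h w.1 w.2 ^ 3)
      (hmeas.pow_const 3).aestronglyMeasurable
  by_cases hi : i ≠ j ∧ i ≠ k
  · refine (integral_congr_ae (ae_of_all _ fun z => ?_)).trans
      (integral_edge_mul_edge_mul_edge_eq_zero hh hdeg hjv hkv hiv.symm (Ne.symm hi.1) hiv.symm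
        (Ne.symm hi.2) hiv.symm)
    rw [hsymm (z i)]
    ring
  by_cases hj : j ≠ i ∧ j ≠ k
  · refine (integral_congr_ae (ae_of_all _ fun z => ?_)).trans
      (integral_edge_mul_edge_mul_edge_eq_zero hh hdeg hiv hkv hjv.symm (Ne.symm hj.1) hjv.symm
        (Ne.symm hj.2) hjv.symm)
    rw [hsymm (z j)]
    ring
  have hk : k ≠ i ∧ k ≠ j := by grind
  refine (integral_congr_ae (ae_of_all _ fun z => ?_)).trans
    (integral_edge_mul_edge_mul_edge_eq_zero hh hdeg hiv hjv hkv.symm (Ne.symm hk.1) hkv.symm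
      (Ne.symm hk.2) hkv.symm)
  rw [hsymm (z k)]

theorem integral_edge_mul_star_mul_star [DecidableEq ι]
    (hmeas : Measurable fun w : Z × Z => h w.1 w.2)
    (hsymm : ∀ x y, h x y = h y x) (hh : MemLp (fun w : Z × Z => h w.1 w.2) 3 (μ.prod μ))
    (hdeg : ∀ᵐ x ∂μ, ∫ y, h x y ∂μ = 0) {a b i j v : ι} (hab : a ≠ b) (hav : a ≠ v)
    (hbv : b ≠ v) (hiv : i ≠ v) (hjv : j ≠ v) :
    ∫ z : ι → Z, h (z a) (z b) * h (z i) (z v) * h (z j) (z v) ∂(Measure.pi fun _ => μ)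
      = (if i = a ∧ j = b then ∫ w, h w.1 w.2 * ∫ u, h w.1 u * h w.2 u ∂μ ∂μ.prod μ else 0)
        + if i = b ∧ j = a then ∫ w, h w.1 w.2 * ∫ u, h w.1 u * h w.2 u ∂μ ∂μ.prod μ else 0 := by
  by_cases ha : a ≠ i ∧ a ≠ j
  · rw [if_neg (by grind), if_neg (by grind), add_zero]
    refine (integral_congr_ae (ae_of_all _ fun z => ?_)).trans
      (integral_edge_mul_edge_mul_edge_eq_zero hh hdeg hiv hjv hab.symm (Ne.symm ha.1) hav.symm
        (Ne.symm ha.2) hav.symm)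
    rw [hsymm (z a)]
    ring
  by_cases hb : b ≠ i ∧ b ≠ j
  · rw [if_neg (by grind), if_neg (by grind), add_zero]
    refine (integral_congr_ae (ae_of_all _ fun z => ?_)).trans
      (integral_edge_mul_edge_mul_edge_eq_zero hh hdeg hiv hjv hab (Ne.symm hb.1) hbv.symm
        (Ne.symm hb.2) hbv.symm)
    ring
  obtain ⟨rfl, rfl⟩ | ⟨rfl, rfl⟩ : (i = a ∧ j = b) ∨ (i = b ∧ j = a) := by grind
  · rw [if_pos ⟨rfl, rfl⟩, if_neg (by grind), add_zero]
    exact integral_triangle hmeas hh hab hav hbv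
  · rw [if_neg (by grind), if_pos ⟨rfl, rfl⟩, zero_add]
    refine (integral_congr_ae (ae_of_all _ fun z => ?_)).trans
      (integral_triangle hmeas hh hab hav hbv)
    ring

end DegenerateKernel

section Increments

variable {Z : Type*} [MeasurableSpace Z] {μ : Measure Z} [IsProbabilityMeasure μ]
  {h : Z → Z → ℝ} {ι : Type*} [Fintype ι] [LinearOrder ι]

theorem memLp_ltSum_comp_eval_prod (hh : MemLp (fun w : Z × Z => h w.1 w.2) 3 (μ.prod μ))
    (s : Finset ι) :
    MemLp (fun z : ι → Z => ltSum s fun i j => h (z i) (z j)) 3 (Measure.pi fun _ => μ) :=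
  memLp_ltSum fun _ _ _ _ hij => memLp_comp_eval_prod hh hij.ne

theorem integral_ltSum_sq_mul_star_eq_zero
    (hh : MemLp (fun w : Z × Z => h w.1 w.2) 3 (μ.prod μ)) (hdeg : ∀ᵐ x ∂μ, ∫ y, h x y ∂μ = 0)
    {s : Finset ι} {v : ι} (hvs : v ∉ s) :
    ∫ z : ι → Z, (ltSum s fun i j => h (z i) (z j)) ^ 2 * ∑ i ∈ s, h (z i) (z v)
      ∂(Measure.pi fun _ => μ) = 0 := by
  have hS := memLp_ltSum_comp_eval_prod hh s
  have hne : ∀ i ∈ s, i ≠ v := fun i hi => ne_of_mem_of_not_mem hi hvs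
  have hint : ∀ i ∈ s, Integrable (fun z : ι → Z => (ltSum s fun i j => h (z i) (z j)) ^ 2 *
      h (z i) (z v)) (Measure.pi fun _ => μ) := fun i hi =>
    (hS.integrable_mul_mul hS (memLp_comp_eval_prod hh (hne i hi))).congr
      (ae_of_all _ fun z => by ring)
  simp only [mul_sum]
  rw [integral_finsetSum _ hint]
  refine sum_eq_zero fun i hi => integral_mul_eq_zero_of_degenerate hdeg (hne i hi)
    (fun z u => ?_) (hint i hi)
  simp only [ltSum]
  congr 1
  refine sum_congr rfl fun a ha => sum_congr rfl fun b hb => ?_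
  rw [update_of_ne (hne a ha), update_of_ne (hne b hb)]

theorem integral_ltSum_mul_star_sq (hmeas : Measurable fun w : Z × Z => h w.1 w.2)
    (hsymm : ∀ x y, h x y = h y x) (hh : MemLp (fun w : Z × Z => h w.1 w.2) 3 (μ.prod μ))
    (hdeg : ∀ᵐ x ∂μ, ∫ y, h x y ∂μ = 0) {s : Finset ι} {v : ι} (hvs : v ∉ s) :
    ∫ z : ι → Z, (ltSum s fun i j => h (z i) (z j)) * (∑ i ∈ s, h (z i) (z v)) ^ 2
      ∂(Measure.pi fun _ => μ)
      = #s * (#s - 1) * ∫ w, h w.1 w.2 * ∫ u, h w.1 u * h w.2 u ∂μ ∂μ.prod μ := by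
  have hne : ∀ i ∈ s, i ≠ v := fun i hi => ne_of_mem_of_not_mem hi hvs
  have hT := memLp_sum_comp_eval_prod hh hvs
  simp only [ltSum_mul]
  rw [integral_ltSum fun a _ b _ hab => (memLp_comp_eval_prod hh hab.ne).integrable_mul_mul hT hT
    |>.congr (ae_of_all _ fun z => by ring)]
  rw [ltSum_congr (g' := fun _ _ => 2 * ∫ w, h w.1 w.2 * ∫ u, h w.1 u * h w.2 u ∂μ ∂μ.prod μ),
    ltSum_const]
  · ring
  intro a ha b hb hab
  have hint : ∀ i ∈ s, ∀ j ∈ s, Integrable (fun z : ι → Z =>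
      h (z a) (z b) * h (z i) (z v) * h (z j) (z v)) (Measure.pi fun _ => μ) :=
    fun i hi j hj => (memLp_comp_eval_prod hh hab.ne).integrable_mul_mul
      (memLp_comp_eval_prod hh (hne i hi)) (memLp_comp_eval_prod hh (hne j hj))
  have hexp : ∀ z : ι → Z, h (z a) (z b) * (∑ i ∈ s, h (z i) (z v)) ^ 2
      = ∑ i ∈ s, ∑ j ∈ s, h (z a) (z b) * h (z i) (z v) * h (z j) (z v) := fun z => by
    simp_rw [sq, sum_mul_sum, mul_sum, mul_assoc]
  rw [integral_congr_ae (ae_of_all _ hexp),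
    integral_finsetSum _ fun i hi => integrable_finsetSum _ (hint i hi),
    sum_congr rfl fun i hi => integral_finsetSum _ (hint i hi)]
  rw [sum_congr rfl fun i hi => sum_congr rfl fun j hj => integral_edge_mul_star_mul_star hmeas
    hsymm hh hdeg hab.ne (hne a ha) (hne b hb) (hne i hi) (hne j hj)]
  simp only [ite_and, sum_add_distrib, sum_ite_irrel, sum_ite_eq', ha, hb, if_true,
    sum_const_zero]
  ring

theorem integral_star_pow_three (hmeas : Measurable fun w : Z × Z => h w.1 w.2)
    (hsymm : ∀ x y, h x y = h y x) (hh : MemLp (fun w : Z × Z => h w.1 w.2) 3 (μ.prod μ))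
    (hdeg : ∀ᵐ x ∂μ, ∫ y, h x y ∂μ = 0) {s : Finset ι} {v : ι} (hvs : v ∉ s) :
    ∫ z : ι → Z, (∑ i ∈ s, h (z i) (z v)) ^ 3 ∂(Measure.pi fun _ => μ)
      = #s * ∫ w, h w.1 w.2 ^ 3 ∂μ.prod μ := by
  have hne : ∀ i ∈ s, i ≠ v := fun i hi => ne_of_mem_of_not_mem hi hvs
  have hint : ∀ i ∈ s, ∀ j ∈ s, ∀ k ∈ s, Integrable (fun z : ι → Z =>
      h (z i) (z v) * h (z j) (z v) * h (z k) (z v)) (Measure.pi fun _ => μ) :=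
    fun i hi j hj k hk => (memLp_comp_eval_prod hh (hne i hi)).integrable_mul_mul
      (memLp_comp_eval_prod hh (hne j hj)) (memLp_comp_eval_prod hh (hne k hk))
  have hexp : ∀ z : ι → Z, (∑ i ∈ s, h (z i) (z v)) ^ 3
      = ∑ i ∈ s, ∑ j ∈ s, ∑ k ∈ s, h (z i) (z v) * h (z j) (z v) * h (z k) (z v) := fun z => by
    rw [pow_three', sum_mul_sum, sum_mul]
    exact sum_congr rfl fun i _ => sum_mul_sum _ _ _ _
  rw [integral_congr_ae (ae_of_all _ hexp), integral_finsetSum _ fun i hi =>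
      integrable_finsetSum _ fun j hj => integrable_finsetSum _ (hint i hi j hj),
    sum_congr rfl fun i hi => integral_finsetSum _ fun j hj =>
      integrable_finsetSum _ (hint i hi j hj),
    sum_congr rfl fun i hi => sum_congr rfl fun j hj => integral_finsetSum _ (hint i hi j hj)]
  rw [sum_congr rfl fun i hi => sum_congr rfl fun j hj => sum_congr rfl fun k hk =>
    integral_star_mul_star_mul_star hmeas hsymm hh hdeg (hne i hi) (hne j hj) (hne k hk)]
  simp [ite_and]

theorem integral_ltSum_pow_three (hmeas : Measurable fun w : Z × Z => h w.1 w.2)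
    (hsymm : ∀ x y, h x y = h y x) (hh : MemLp (fun w : Z × Z => h w.1 w.2) 3 (μ.prod μ))
    (hdeg : ∀ᵐ x ∂μ, ∫ y, h x y ∂μ = 0) (s : Finset ι) :
    ∫ z : ι → Z, (ltSum s fun i j => h (z i) (z j)) ^ 3 ∂(Measure.pi fun _ => μ)
      = #s * (#s - 1) / 2 * ∫ w, h w.1 w.2 ^ 3 ∂μ.prod μ
        + #s * (#s - 1) * (#s - 2) * ∫ w, h w.1 w.2 * ∫ u, h w.1 u * h w.2 u ∂μ ∂μ.prod μ := by
  induction s using Finset.induction_on_max with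
  | empty => simp [ltSum]
  | insert v s hv ih =>
    have hvs : v ∉ s := fun h => lt_irrefl v (hv v h)
    simp only [ltSum_insert_of_forall_lt hv]
    rw [integral_add_pow_three (memLp_ltSum_comp_eval_prod hh s) (memLp_sum_comp_eval_prod hh hvs),
      ih, integral_ltSum_sq_mul_star_eq_zero hh hdeg hvs,
      integral_ltSum_mul_star_sq hmeas hsymm hh hdeg hvs,
      integral_star_pow_three hmeas hsymm hh hdeg hvs, card_insert_of_notMem hvs]
    push_cast
    ring

end Increments

theorem degenerate_u_statistic_third_moment_general
    {Z : Type*} [MeasurableSpace Z] (μ : Measure Z) [IsProbabilityMeasure μ]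
    (h : Z → Z → ℝ) (hmeas : Measurable fun w : Z × Z => h w.1 w.2)
    (hsymm : ∀ z z', h z z' = h z' z)
    (hdeg : ∀ᵐ z ∂μ, (∫ z', h z z' ∂μ) = 0)
    (hcube : Integrable (fun w : Z × Z => |h w.1 w.2| ^ 3) (μ.prod μ))
    (n : ℕ) (hn : 2 ≤ n) :
    (∫ z : Fin n → Z,
        ((2 / ((n : ℝ) * ((n : ℝ) - 1))) *
          ∑ i : Fin n, ∑ j : Fin n, if i < j then h (z i) (z j) else 0) ^ 3
        ∂(Measure.pi fun _ => μ))
      = (8 * ((n : ℝ) - 2) / ((n : ℝ) ^ 2 * ((n : ℝ) - 1) ^ 2)) *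
          (∫ w : Z × Z, h w.1 w.2 * ∫ z'', h w.1 z'' * h w.2 z'' ∂μ ∂μ.prod μ)
        + (2 / ((n : ℝ) * ((n : ℝ) - 1))) ^ 2 *
          ∫ w : Z × Z, (h w.1 w.2) ^ 3 ∂μ.prod μ := by
  have hh : MemLp (fun w : Z × Z => h w.1 w.2) 3 (μ.prod μ) :=
    (integrable_norm_rpow_iff hmeas.aestronglyMeasurable (by norm_num) (by norm_num)).1
      (by simpa [Real.norm_eq_abs] using hcube)
  simp_rw [mul_pow]
  rw [integral_const_mul]
  change _ * ∫ z : Fin n → Z, (ltSum univ fun i j => h (z i) (z j)) ^ 3 ∂(Measure.pi fun _ => μ) = _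
  rw [integral_ltSum_pow_three hmeas hsymm hh hdeg, card_univ, Fintype.card_fin]
  have hn2 : (2 : ℝ) ≤ n := by exact_mod_cast hn
  have hn0 : (n : ℝ) ≠ 0 := by positivity
  have hn1 : (n : ℝ) - 1 ≠ 0 := by linarith
  field_simp
  ring

/-- Third moment of the degenerate U-statistic:
`E[(MMD_u²)³] = (8(n-2)/(n²(n-1)²)) E[h(z,z') E_{z''}(h(z,z'')h(z',z''))]
  + (2/(n(n-1)))² E[h³(z,z')]`. -/
theorem degenerate_u_statistic_third_moment
    {Z : Type*} [MeasurableSpace Z] (μ : Measure Z) [IsProbabilityMeasure μ]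
    (h : Z → Z → ℝ) (hmeas : Measurable fun w : Z × Z => h w.1 w.2)
    (hsymm : ∀ z z', h z z' = h z' z)
    (hdeg : ∀ᵐ z ∂μ, (∫ z', h z z' ∂μ) = 0)
    (hint : Integrable (fun w : Z × Z => h w.1 w.2) (μ.prod μ))
    (hcube : Integrable (fun w : Z × Z => |h w.1 w.2| ^ 3) (μ.prod μ))
    (htri : Integrable
      (fun w : Z × Z => h w.1 w.2 * ∫ z'', h w.1 z'' * h w.2 z'' ∂μ) (μ.prod μ))
    (n : ℕ) (hn : 2 ≤ n) :
    (∫ z : Fin n → Z,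
        ((2 / ((n : ℝ) * ((n : ℝ) - 1))) *
          ∑ i : Fin n, ∑ j : Fin n, if i < j then h (z i) (z j) else 0) ^ 3
        ∂(Measure.pi fun _ => μ))
      = (8 * ((n : ℝ) - 2) / ((n : ℝ) ^ 2 * ((n : ℝ) - 1) ^ 2)) *
          (∫ w : Z × Z, h w.1 w.2 * ∫ z'', h w.1 z'' * h w.2 z'' ∂μ ∂μ.prod μ)
        + (2 / ((n : ℝ) * ((n : ℝ) - 1))) ^ 2 *
          ∫ w : Z × Z, (h w.1 w.2) ^ 3 ∂μ.prod μ :=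
  degenerate_u_statistic_third_moment_general μ h hmeas hsymm hdeg hcube n hn
end
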